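/- arXiv:2109.05239 — 4 statements merged into one kernel-verified Lean document; each statement's English description precedes it below -/
import Mathlib

section
/- Let X be a Banach sequence space such that X embeds continuously into ℓ∞, X_a is non-trivial, and X_a ≠ X. Then the quotient space X / X_a is not isomorphic to a dual Banach space. -/
open Filter Topology MeasureTheory Set

/-- A **Banach ideal space** on a measure space `(α, μ)`: a collection of (real-valued)
measurable functions with a complete lattice-compatible norm satisfying the ideal property. -/
structure BanachIdealSpace (α : Type*) [MeasurableSpace α] (μ : Measure α) where
  Mem : (α → ℝ) → Prop
  N : (α → ℝ) → ℝ
  mem_zero : Mem 0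
  mem_add : ∀ f g, Mem f → Mem g → Mem (f + g)
  mem_smul : ∀ (c : ℝ) f, Mem f → Mem (c • f)
  measurable : ∀ f, Mem f → AEMeasurable f μ
  N_nonneg : ∀ f, 0 ≤ N f
  N_zero : N 0 = 0
  N_eq_zero : ∀ f, Mem f → N f = 0 → (∀ᵐ x ∂μ, f x = 0)
  N_add : ∀ f g, Mem f → Mem g → N (f + g) ≤ N f + N g
  N_smul : ∀ (c : ℝ) f, N (c • f) = |c| * N f
  ideal : ∀ f g, AEMeasurable f μ → (∀ᵐ x ∂μ, |f x| ≤ |g x|) → Mem g →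
    Mem f ∧ N f ≤ N g
  complete : ∀ u : ℕ → (α → ℝ), (∀ n, Mem (u n)) →
    (∀ ε : ℝ, 0 < ε → ∃ n₀ : ℕ, ∀ m n, n₀ ≤ m → n₀ ≤ n → N (u m - u n) < ε) →
    ∃ f, Mem f ∧ Tendsto (fun n => N (u n - f)) atTop (𝓝 0)

namespace BanachIdealSpace

variable {α : Type*} [MeasurableSpace α] {μ : Measure α}

/-- Distance (w.r.t. a norm functional `N`) from `f` to a set `S` of functions. -/
noncomputable def distIn (N : (α → ℝ) → ℝ) (f : α → ℝ) (S : Set (α → ℝ)) : ℝ :=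
  sInf ((fun g => N (f - g)) '' S)

/-- The set of **order continuous elements** of a (generalized) function space given by a
membership predicate `Mem` and a norm `N`: those `f` such that every sequence `uₙ` with
`0 ≤ uₙ ≤ |f|` a.e., a.e. non-increasing and converging to `0` a.e., satisfies `N (uₙ) → 0`. -/
def ocSet (μ : Measure α) (Mem : (α → ℝ) → Prop) (N : (α → ℝ) → ℝ) : Set (α → ℝ) :=
  {f | Mem f ∧ ∀ u : ℕ → (α → ℝ), (∀ n, Mem (u n)) →
    (∀ n, ∀ᵐ x ∂μ, 0 ≤ u n x ∧ u n x ≤ |f x|) →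
    (∀ n, ∀ᵐ x ∂μ, u (n + 1) x ≤ u n x) →
    (∀ᵐ x ∂μ, Tendsto (fun n => u n x) atTop (𝓝 0)) →
    Tendsto (fun n => N (u n)) atTop (𝓝 0)}

/-- The ideal `X_a` of order continuous elements of a Banach ideal space `X`. -/
def oc (X : BanachIdealSpace α μ) : Set (α → ℝ) := ocSet μ X.Mem X.N

/-- An **order ideal** of a Banach ideal space: a closed solid linear subspace. -/
structure IsOrderIdeal (X : BanachIdealSpace α μ) (J : Set (α → ℝ)) : Prop where
  subset : ∀ f ∈ J, X.Mem f
  zero : (0 : α → ℝ) ∈ J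
  add : ∀ f g, f ∈ J → g ∈ J → f + g ∈ J
  smul : ∀ (c : ℝ) f, f ∈ J → c • f ∈ J
  solid : ∀ f g, f ∈ J → X.Mem g → (∀ᵐ x ∂μ, |g x| ≤ |f x|) → g ∈ J
  closed : ∀ (u : ℕ → (α → ℝ)) f, (∀ n, u n ∈ J) → X.Mem f →
    Tendsto (fun n => X.N (f - u n)) atTop (𝓝 0) → f ∈ J

/-- The **Fatou property** of a Banach ideal space. -/
def Fatou (X : BanachIdealSpace α μ) : Prop :=
  ∀ (u : ℕ → (α → ℝ)) (f : α → ℝ), (∀ n, X.Mem (u n)) → AEMeasurable f μ →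
    (∀ᵐ x ∂μ, 0 ≤ u 0 x) → (∀ᵐ x ∂μ, Monotone fun n => u n x) →
    (∀ᵐ x ∂μ, Tendsto (fun n => u n x) atTop (𝓝 (f x))) →
    BddAbove (Set.range fun n => X.N (u n)) →
    X.Mem f ∧ Tendsto (fun n => X.N (u n)) atTop (𝓝 (X.N f))

/-- The **semi-Fatou property**: if `0 ≤ uₙ ↑ f ∈ X` then `‖uₙ‖ ↑ ‖f‖`. -/
def SemiFatou (X : BanachIdealSpace α μ) : Prop :=
  ∀ (u : ℕ → (α → ℝ)) (f : α → ℝ), (∀ n, X.Mem (u n)) → X.Mem f →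
    (∀ᵐ x ∂μ, 0 ≤ u 0 x) → (∀ᵐ x ∂μ, Monotone fun n => u n x) →
    (∀ᵐ x ∂μ, Tendsto (fun n => u n x) atTop (𝓝 (f x))) →
    Tendsto (fun n => X.N (u n)) atTop (𝓝 (X.N f))

/-- A Banach ideal space is **rearrangement invariant (symmetric)**: equimeasurable
functions belong to the space simultaneously and have equal norms. -/
def Symmetric (X : BanachIdealSpace α μ) : Prop :=
  ∀ f g, AEMeasurable f μ →
    (∀ lam : ℝ, 0 < lam → μ {x | lam < |f x|} = μ {x | lam < |g x|}) →
    X.Mem g → X.Mem f ∧ X.N f = X.N g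

/-- The **non-increasing rearrangement** of a function `f` (w.r.t. the measure `μ`). -/
noncomputable def rear (μ : Measure α) (f : α → ℝ) (t : ℝ) : ℝ :=
  sInf {lam : ℝ | 0 < lam ∧ μ {x | lam < |f x|} ≤ ENNReal.ofReal t}

/-- A (generalized) function space given by `(Mem, N)` contains a **lattice isometric copy
of `ℓ∞`**: there is a linear map from bounded sequences which preserves absolute values
(hence the lattice operations) and is an isometry for the sup norm on bounded sequences. -/
def HasLatticeCopyLinf (Mem : (α → ℝ) → Prop) (N : (α → ℝ) → ℝ) : Prop :=
  ∃ T : (ℕ → ℝ) → (α → ℝ),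
    (∀ x y, T (x + y) = T x + T y) ∧
    (∀ (c : ℝ) x, T (c • x) = c • T x) ∧
    (∀ x, T (fun n => |x n|) = fun t => |T x t|) ∧
    (∀ x : ℕ → ℝ, BddAbove (Set.range fun n => |x n|) →
      Mem (T x) ∧ N (T x) = ⨆ n, |x n|)

end BanachIdealSpace

open BanachIdealSpace

/-!
Take `x ∈ X \ X_a`. Since `X` is complete and its coordinates are continuous, the tails of `|x|`
cannot be approximated by its finite blocks, so there are `δ > 0` and consecutive blocks
`[q k, q (k + 1))` on each of which `|x|` has norm at least `δ`. Restricting `|x|` to the unions of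
blocks indexed by an almost disjoint family of `𝔠` infinite sets gives elements `y i ∉ X_a`, while
any combination `∑ s i • y i` with `|s i| ≤ 1` is dominated by `|x|` off a finite set, hence lies
within `‖x‖` of `X_a`. Through an isomorphism `X / X_a ≃ V*` the `y i` become nonzero functionals
`e i` with `∑ i, |e i v| ≤ C * ‖v‖`. Hajnal's free set theorem yields `cf 𝔠` of them, each isolated
by a vector `v i`, so that `T ↦ ∑' i ∈ T, e i` is injective; thus `2 ^ cf 𝔠 ≤ #V* ≤ #X ≤ 𝔠`,
against König's theorem.
-/

lemma abs_indicator {ι : Type*} (s : Set ι) (f : ι → ℝ) : |(s.indicator f)| = s.indicator |f| := by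
  ext j; by_cases hj : j ∈ s <;> simp [hj]

lemma abs_indicator_abs {ι : Type*} (x : ι → ℝ) (s : Set ι) :
    |(s.indicator |x|)| = s.indicator |x| := by
  rw [abs_indicator, abs_abs]

def blockUnion (q : ℕ → ℕ) (A : Set ℕ) : Set ℕ := ⋃ k ∈ A, Ico (q k) (q (k + 1))

lemma blockUnion_inter_finite {q : ℕ → ℕ} (hq : Monotone q) {A B : Set ℕ}
    (h : (A ∩ B).Finite) : (blockUnion q A ∩ blockUnion q B).Finite := by
  refine (h.biUnion fun k _ => finite_Ico (q k) (q (k + 1))).subset ?_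
  rintro j ⟨hjA, hjB⟩
  simp only [blockUnion, mem_iUnion₂] at hjA hjB ⊢
  obtain ⟨k, hk, hjk⟩ := hjA
  obtain ⟨k', hk', hjk'⟩ := hjB
  obtain rfl : k = k' := by
    by_contra hne
    exact disjoint_left.1 (hq.pairwise_disjoint_on_Ico_succ hne) hjk hjk'
  exact ⟨k, ⟨hk, hk'⟩, hjk⟩

def prefixCodes (i : ℕ → Bool) : Set ℕ :=
  range fun n => Encodable.encode ((List.range n).map i)

lemma prefixCodes_infinite (i : ℕ → Bool) : (prefixCodes i).Infinite :=
  infinite_range_of_injective fun n m h => by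
    simpa using congrArg List.length (Encodable.encode_injective h)

lemma prefixCodes_inter_finite {i i' : ℕ → Bool} (h : i ≠ i') :
    (prefixCodes i ∩ prefixCodes i').Finite := by
  obtain ⟨n₀, hn₀⟩ := Function.ne_iff.1 h
  refine ((finite_Iic n₀).image fun n => Encodable.encode ((List.range n).map i)).subset ?_
  rintro _ ⟨⟨n, rfl⟩, ⟨n', hn'⟩⟩
  have hlists := Encodable.encode_injective hn'
  obtain rfl : n' = n := by simpa using congrArg List.length hlists
  refine ⟨n', mem_Iic.2 (not_lt.1 fun hlt => hn₀ ?_), rfl⟩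
  exact (List.map_inj_left.1 hlists.symm) n₀ (List.mem_range.2 hlt)

namespace BanachIdealSpace

lemma distIn_le {α : Type*} {N : (α → ℝ) → ℝ} (hN : ∀ f, 0 ≤ N f) (f : α → ℝ) {S : Set (α → ℝ)}
    {g : α → ℝ} (hg : g ∈ S) : distIn N f S ≤ N (f - g) :=
  csInf_le ⟨0, by rintro _ ⟨h, -, rfl⟩; exact hN _⟩ ⟨g, hg, rfl⟩

section General

variable {α : Type*} [MeasurableSpace α] {μ : Measure α} (X : BanachIdealSpace α μ)

lemma N_neg (f : α → ℝ) : X.N (-f) = X.N f := by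
  simpa using X.N_smul (-1) f

lemma N_sub_comm (f g : α → ℝ) : X.N (f - g) = X.N (g - f) := by
  rw [← N_neg, neg_sub]

lemma mem_sub {f g : α → ℝ} (hf : X.Mem f) (hg : X.Mem g) : X.Mem (f - g) := by
  simpa [sub_eq_add_neg] using X.mem_add _ _ hf (X.mem_smul (-1) g hg)

lemma mem_sum {ι : Type*} (F : Finset ι) (y : ι → α → ℝ) (hy : ∀ i ∈ F, X.Mem (y i)) :
    X.Mem (∑ i ∈ F, y i) := by
  induction F using Finset.cons_induction with
  | empty => simpa using X.mem_zero
  | cons i F hi ih =>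
    rw [Finset.forall_mem_cons] at hy
    rw [Finset.sum_cons]
    exact X.mem_add _ _ hy.1 (ih hy.2)

lemma map_sum_smul {W : Type*} [AddCommGroup W] [Module ℝ W] {Q : (α → ℝ) → W}
    (hQadd : ∀ x y, X.Mem x → X.Mem y → Q (x + y) = Q x + Q y)
    (hQsmul : ∀ (c : ℝ) x, X.Mem x → Q (c • x) = c • Q x)
    {ι : Type*} (F : Finset ι) (s : ι → ℝ) {y : ι → α → ℝ} (hy : ∀ i, X.Mem (y i)) :
    Q (∑ i ∈ F, s i • y i) = ∑ i ∈ F, s i • Q (y i) := by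
  induction F using Finset.cons_induction with
  | empty => simpa using hQsmul 0 0 X.mem_zero
  | cons i F hi ih =>
    rw [Finset.sum_cons, Finset.sum_cons, hQadd _ _ (X.mem_smul _ _ (hy i))
      (X.mem_sum F _ fun j _ => X.mem_smul _ _ (hy j)), hQsmul _ _ (hy i), ih]

end General

variable (X : BanachIdealSpace ℕ Measure.count)

lemma mem_of_abs_le {f g : ℕ → ℝ} (hg : X.Mem g) (h : |f| ≤ |g|) : X.Mem f :=
  (X.ideal f g Measurable.of_discrete.aemeasurable (Measure.ae_count_iff.2 h) hg).1

lemma N_le_of_abs_le {f g : ℕ → ℝ} (hg : X.Mem g) (h : |f| ≤ |g|) : X.N f ≤ X.N g :=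
  (X.ideal f g Measurable.of_discrete.aemeasurable (Measure.ae_count_iff.2 h) hg).2

lemma mem_indicator {f : ℕ → ℝ} (hf : X.Mem f) (s : Set ℕ) : X.Mem (s.indicator f) :=
  X.mem_of_abs_le hf <| by
    rw [abs_indicator]; exact Set.indicator_le_self' fun j _ => abs_nonneg (f j)

lemma mem_indicator_abs {x : ℕ → ℝ} (hx : X.Mem x) (s : Set ℕ) : X.Mem (s.indicator |x|) :=
  X.mem_indicator (X.mem_of_abs_le hx (abs_abs x).le) s

lemma N_indicator_abs_mono {x : ℕ → ℝ} (hx : X.Mem x) {s t : Set ℕ} (hst : s ⊆ t) :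
    X.N (s.indicator |x|) ≤ X.N (t.indicator |x|) :=
  X.N_le_of_abs_le (X.mem_indicator_abs hx t) <| by
    rw [abs_indicator_abs, abs_indicator_abs]
    exact Set.indicator_le_indicator_of_subset hst fun j => abs_nonneg (x j)

lemma mem_oc_iff {f : ℕ → ℝ} :
    f ∈ X.oc ↔ X.Mem f ∧ ∀ u : ℕ → ℕ → ℝ, (∀ n, X.Mem (u n)) →
      (∀ n j, 0 ≤ u n j ∧ u n j ≤ |f j|) → (∀ n j, u (n + 1) j ≤ u n j) →
      (∀ j, Tendsto (u · j) atTop (𝓝 0)) → Tendsto (fun n => X.N (u n)) atTop (𝓝 0) := by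
  simp only [oc, ocSet, Measure.ae_count_iff, Set.mem_ofPred_eq]

lemma mem_oc_of_finite_support {f : ℕ → ℝ} (hf : X.Mem f) (hs : f.support.Finite) :
    f ∈ X.oc := by
  refine (X.mem_oc_iff).2 ⟨hf, fun u _ hbd _ hlim => ?_⟩
  -- `u n` is dominated by `ε n • f`, where the finite sum `ε n` tends to `0`
  set ε : ℕ → ℝ := fun n => ∑ j ∈ hs.toFinset, u n j / |f j|
  have hε : Tendsto ε atTop (𝓝 0) := by
    simpa using tendsto_finsetSum hs.toFinset fun j _ => (hlim j).div_const |f j|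
  have hdom : ∀ n, X.N (u n) ≤ ε n * X.N f := by
    intro n
    have hε0 : 0 ≤ ε n := Finset.sum_nonneg fun j _ => div_nonneg (hbd n j).1 (abs_nonneg _)
    calc X.N (u n) ≤ X.N (ε n • f) := X.N_le_of_abs_le (X.mem_smul _ _ hf) fun j => ?_
      _ = ε n * X.N f := by rw [X.N_smul, abs_of_nonneg hε0]
    rw [Pi.abs_apply, Pi.abs_apply, Pi.smul_apply, smul_eq_mul, abs_mul, abs_of_nonneg hε0,
      abs_of_nonneg (hbd n j).1]
    by_cases hj : f j = 0
    · simpa [hj] using (hbd n j).2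
    · calc u n j = u n j / |f j| * |f j| := by field_simp
        _ ≤ ε n * |f j| := by
          gcongr
          exact Finset.single_le_sum (fun k _ => div_nonneg (hbd n k).1 (abs_nonneg _))
            (hs.mem_toFinset.2 hj)
  exact squeeze_zero (fun n => X.N_nonneg _) hdom (by simpa using hε.mul_const (X.N f))

lemma tendsto_N_tail_of_mem_oc {f : ℕ → ℝ} (hf : f ∈ X.oc) :
    Tendsto (fun a => X.N ((Ici a).indicator |f|)) atTop (𝓝 0) := by
  have hmem := ((X.mem_oc_iff).1 hf).1
  refine ((X.mem_oc_iff).1 hf).2 _ (fun a => X.mem_indicator_abs hmem _)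
    (fun a j => ⟨?_, ?_⟩) (fun a j => ?_) (fun j => ?_)
  · exact Set.indicator_nonneg (fun k _ => abs_nonneg (f k)) j
  · exact Set.indicator_le_self' (fun k _ => abs_nonneg (f k)) j
  · exact indicator_le_indicator_apply_of_subset (Ici_subset_Ici.2 a.le_succ) (abs_nonneg _)
  · refine tendsto_atTop_of_eventually_const (i₀ := j + 1) fun a ha => ?_
    exact indicator_of_notMem (by simp only [mem_Ici]; omega) _

lemma mem_oc_of_tendsto_N_tail {f : ℕ → ℝ} (hf : X.Mem f)
    (htail : Tendsto (fun a => X.N ((Ici a).indicator |f|)) atTop (𝓝 0)) : f ∈ X.oc := by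
  refine (X.mem_oc_iff).2 ⟨hf, fun u hu hbd hanti hlim => ?_⟩
  refine tendsto_order.2 ⟨fun b hb => Eventually.of_forall fun n => hb.trans_le (X.N_nonneg _),
    fun ε hε => ?_⟩
  obtain ⟨a, ha⟩ := (htail.eventually (gt_mem_nhds (half_pos hε))).exists
  -- the heads of the `u n` are dominated by the finitely supported `(Iio a).indicator |f| ∈ X_a`
  have hhead : Tendsto (fun n => X.N ((Iio a).indicator (u n))) atTop (𝓝 0) := by
    have hg := X.mem_oc_of_finite_support (X.mem_indicator_abs hf (Iio a))
      ((finite_Iio a).subset support_indicator_subset)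
    refine ((X.mem_oc_iff).1 hg).2 _ (fun n => X.mem_indicator (hu n) _)
      (fun n j => ⟨?_, ?_⟩) (fun n j => indicator_le_indicator (hanti n j)) (fun j => ?_)
    · exact Set.indicator_nonneg (fun k _ => (hbd n k).1) j
    · rw [← Pi.abs_apply, abs_indicator_abs]; exact indicator_le_indicator (hbd n j).2
    · by_cases hj : j ∈ Iio a
      · simpa only [indicator_of_mem hj] using hlim j
      · simp only [indicator_of_notMem hj, tendsto_const_nhds]
  filter_upwards [hhead.eventually (gt_mem_nhds (half_pos hε))] with n hn
  have htail_le : X.N ((Ici a).indicator (u n)) ≤ X.N ((Ici a).indicator |f|) :=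
    X.N_le_of_abs_le (X.mem_indicator_abs hf _) <| by
      rw [abs_indicator, abs_indicator_abs]
      exact indicator_mono fun j => by
        rw [Pi.abs_apply, abs_of_nonneg (hbd n j).1]; exact (hbd n j).2
  calc X.N (u n) = X.N ((Iio a).indicator (u n) + (Ici a).indicator (u n)) := by
        rw [← compl_Iio, indicator_self_add_compl]
    _ ≤ X.N ((Iio a).indicator (u n)) + X.N ((Ici a).indicator (u n)) :=
        X.N_add _ _ (X.mem_indicator (hu n) _) (X.mem_indicator (hu n) _)
    _ < ε := by linarith

section LinftyEmbedding

variable (hK : ∃ K : ℝ, ∀ x, X.Mem x → ∀ n, |x n| ≤ K * X.N x)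
include hK

lemma eq_of_tendsto_N_sub {u : ℕ → ℕ → ℝ} {f g : ℕ → ℝ} (hu : ∀ n, X.Mem (u n))
    (hf : X.Mem f) (hN : Tendsto (fun n => X.N (u n - f)) atTop (𝓝 0))
    (hg : ∀ j, Tendsto (u · j) atTop (𝓝 (g j))) : f = g := by
  obtain ⟨K, hK⟩ := hK
  funext j
  refine tendsto_nhds_unique ?_ (hg j)
  rw [tendsto_iff_dist_tendsto_zero]
  refine squeeze_zero (fun n => dist_nonneg) (fun n => ?_) (by simpa using hN.const_mul K)
  simpa [Real.dist_eq] using hK _ (X.mem_sub (hu n) hf) j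

lemma tendsto_N_indicator_Ico_sub_Ici {x : ℕ → ℝ} (hx : X.Mem x)
    (hblock : ∀ ε > 0, ∃ a, ∀ b, X.N ((Ico a b).indicator |x|) < ε) (a : ℕ) :
    Tendsto (fun b => X.N ((Ico a b).indicator |x| - (Ici a).indicator |x|)) atTop (𝓝 0) := by
  have hcauchy : ∀ ε > 0, ∃ b₀, ∀ m n, b₀ ≤ m → b₀ ≤ n →
      X.N ((Ico a m).indicator |x| - (Ico a n).indicator |x|) < ε := by
    intro ε hε
    obtain ⟨a₀, ha₀⟩ := hblock ε hε
    refine ⟨max a a₀, fun m n hm hn => ?_⟩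
    wlog hnm : n ≤ m generalizing m n
    · rw [N_sub_comm]; exact this n m hn hm (by omega)
    calc X.N ((Ico a m).indicator |x| - (Ico a n).indicator |x|)
        = X.N ((Ico n m).indicator |x|) := by
          congr 1; ext j
          simp only [Pi.sub_apply, indicator_apply, mem_Ico]
          split_ifs <;> first | (exfalso; omega) | simp
      _ ≤ X.N ((Ico a₀ m).indicator |x|) :=
          X.N_indicator_abs_mono hx (Ico_subset_Ico_left (by omega))
      _ < ε := ha₀ m
  obtain ⟨f, hf, hlim⟩ := X.complete _ (fun b => X.mem_indicator_abs hx _) hcauchy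
  have hf_eq : f = (Ici a).indicator |x| := by
    refine X.eq_of_tendsto_N_sub hK (fun b => X.mem_indicator_abs hx _) hf hlim fun j => ?_
    refine tendsto_atTop_of_eventually_const (i₀ := j + 1) fun b hb => ?_
    simp only [indicator_apply, mem_Ico, mem_Ici]
    split_ifs <;> first | rfl | (exfalso; omega)
  rwa [← hf_eq]

lemma tendsto_N_tail_of_tendsto_N_block {x : ℕ → ℝ} (hx : X.Mem x)
    (hblock : ∀ ε > 0, ∃ a, ∀ b, X.N ((Ico a b).indicator |x|) < ε) :
    Tendsto (fun a => X.N ((Ici a).indicator |x|)) atTop (𝓝 0) := by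
  refine tendsto_order.2 ⟨fun b hb => Eventually.of_forall fun n => hb.trans_le (X.N_nonneg _),
    fun ε hε => ?_⟩
  obtain ⟨a₀, ha₀⟩ := hblock (ε / 2) (half_pos hε)
  filter_upwards [eventually_ge_atTop a₀] with a ha
  have htail : X.N ((Ici a).indicator |x|) ≤ ε / 2 := by
    refine ge_of_tendsto' (by simpa using
      (X.tendsto_N_indicator_Ico_sub_Ici hK hx hblock a).const_add (ε / 2)) fun b => ?_
    calc X.N ((Ici a).indicator |x|)
        = X.N ((Ico a b).indicator |x| + ((Ici a).indicator |x| - (Ico a b).indicator |x|)) := by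
          rw [add_sub_cancel]
      _ ≤ X.N ((Ico a b).indicator |x|) + X.N ((Ici a).indicator |x| - (Ico a b).indicator |x|) :=
          X.N_add _ _ (X.mem_indicator_abs hx _)
            (X.mem_sub (X.mem_indicator_abs hx _) (X.mem_indicator_abs hx _))
      _ ≤ ε / 2 + X.N ((Ico a b).indicator |x| - (Ici a).indicator |x|) := by
          rw [N_sub_comm X ((Ici a).indicator _)]
          gcongr
          exact (X.N_indicator_abs_mono hx (Ico_subset_Ico_left ha)).trans (ha₀ b).le
  linarith

lemma exists_strictMono_blocks {x : ℕ → ℝ} (hx : X.Mem x) (hxoc : x ∉ X.oc) :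
    ∃ δ > 0, ∃ q : ℕ → ℕ, StrictMono q ∧
      ∀ k, δ ≤ X.N ((Ico (q k) (q (k + 1))).indicator |x|) := by
  obtain ⟨δ, hδ, hblock⟩ : ∃ δ > 0, ∀ a, ∃ b, δ ≤ X.N ((Ico a b).indicator |x|) := by
    by_contra! h
    exact hxoc (X.mem_oc_of_tendsto_N_tail hx (X.tendsto_N_tail_of_tendsto_N_block hK hx h))
  choose B hB using hblock
  have hlt : ∀ a, a < B a := fun a => by
    by_contra! h
    have := hB a
    rw [Ico_eq_empty_of_le h, indicator_empty', X.N_zero] at this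
    linarith
  refine ⟨δ, hδ, fun k => B^[k] 0, strictMono_nat_of_lt_succ fun k => ?_, fun k => ?_⟩
  · simpa only [Function.iterate_succ_apply'] using hlt _
  · simpa only [Function.iterate_succ_apply'] using hB _

end LinftyEmbedding

lemma indicator_blockUnion_notMem_oc {x : ℕ → ℝ} (hx : X.Mem x) {δ : ℝ} (hδ : 0 < δ)
    {q : ℕ → ℕ} (hq : StrictMono q) (hblock : ∀ k, δ ≤ X.N ((Ico (q k) (q (k + 1))).indicator |x|))
    {A : Set ℕ} (hA : A.Infinite) : (blockUnion q A).indicator |x| ∉ X.oc := by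
  intro hoc
  have htail := X.tendsto_N_tail_of_mem_oc hoc
  simp only [abs_indicator_abs, indicator_indicator] at htail
  obtain ⟨m, hm⟩ := (htail.eventually (gt_mem_nhds hδ)).exists
  obtain ⟨k, hk, hmk⟩ := hA.exists_gt m
  refine (hblock k).not_gt ((X.N_indicator_abs_mono hx fun j hj => ?_).trans_lt hm)
  exact ⟨mem_Ici.2 ((hmk.le.trans (hq.id_le k)).trans hj.1), mem_biUnion hk hj⟩

lemma abs_sum_smul_indicator_apply_le {ι : Type*} (F : Finset ι) (H : ι → Set ℕ) {s : ι → ℝ}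
    (hs : ∀ i, |s i| ≤ 1) (f : ℕ → ℝ) {j : ℕ}
    (hj : ∀ i ∈ F, ∀ i' ∈ F, j ∈ H i → j ∈ H i' → i = i') :
    |(∑ i ∈ F, s i • (H i).indicator f) j| ≤ |f j| := by
  rw [Finset.sum_apply]
  by_cases h : ∃ i ∈ F, j ∈ H i
  · obtain ⟨i, hi, hji⟩ := h
    rw [Finset.sum_eq_single i (fun i' hi' hne => by
      simp [indicator_of_notMem fun h' => hne (hj i' hi' i hi h' hji)]) (absurd hi)]
    simpa [indicator_of_mem hji, abs_mul] using
      mul_le_of_le_one_left (abs_nonneg (f j)) (hs i)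
  · push Not at h
    rw [Finset.sum_eq_zero fun i hi => by
      rw [Pi.smul_apply, indicator_of_notMem (h i hi), smul_zero], abs_zero]
    exact abs_nonneg _

lemma distIn_sum_smul_indicator_le {x : ℕ → ℝ} (hx : X.Mem x) {ι : Type*} (F : Finset ι)
    (H : ι → Set ℕ) (hH : ∀ i ∈ F, ∀ i' ∈ F, i ≠ i' → (H i ∩ H i').Finite)
    {s : ι → ℝ} (hs : ∀ i, |s i| ≤ 1) :
    distIn X.N (∑ i ∈ F, s i • (H i).indicator |x|) X.oc ≤ X.N |x| := by
  set z := ∑ i ∈ F, s i • (H i).indicator |x|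
  have hz : X.Mem z := X.mem_sum F _ fun i _ => X.mem_smul _ _ (X.mem_indicator_abs hx _)
  -- off the finite set `E` of overlaps, `z` is dominated by `|x|`
  set E : Set ℕ := ⋃ p ∈ F.offDiag, H p.1 ∩ H p.2
  have hE : E.Finite := F.offDiag.finite_toSet.biUnion fun p hp => by
    obtain ⟨h1, h2, hne⟩ := Finset.mem_offDiag.1 hp
    exact hH _ h1 _ h2 hne
  have hEoc : E.indicator z ∈ X.oc :=
    X.mem_oc_of_finite_support (X.mem_indicator hz E) (hE.subset support_indicator_subset)
  refine (distIn_le X.N_nonneg z hEoc).trans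
    (X.N_le_of_abs_le (X.mem_of_abs_le hx (abs_abs x).le) fun j => ?_)
  rw [← indicator_compl]
  simp only [Pi.abs_apply, abs_abs]
  by_cases hjE : j ∈ E
  · simp [indicator_of_notMem (notMem_compl_iff.2 hjE)]
  · rw [indicator_of_mem hjE]
    have := abs_sum_smul_indicator_apply_le F H hs |x| (j := j) fun i hi i' hi' hji hji' => by
      by_contra hne
      exact hjE (mem_biUnion (x := (i, i')) (Finset.mem_offDiag.2 ⟨hi, hi', hne⟩) ⟨hji, hji'⟩)
    simpa only [Pi.abs_apply, abs_abs] using this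

end BanachIdealSpace

open Cardinal

universe u

-- Hajnal's free set theorem for set mappings with finite values
section FreeSet

variable {ι : Type*} {κ : Cardinal} (hreg : κ.IsRegular) (hκ : ℵ₀ < κ)
include hreg hκ

lemma exists_pairwise_notMem_of_mk_lt (G : ι → Finset ι) {S : Set ι} (hS : κ ≤ #S)
    (hsparse : ∀ t, #{i ∈ S | t ∈ G i} < κ) :
    ∃ S' ⊆ S, κ ≤ #S' ∧ S'.Pairwise fun i j => j ∉ G i := by
  obtain ⟨M, hM⟩ := zorn_subset {T | T ⊆ S ∧ T.Pairwise fun i j => j ∉ G i}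
    fun c hc hchain => ⟨⋃₀ c, ⟨sUnion_subset fun T hT => (hc hT).1,
      (pairwise_sUnion hchain.directedOn).2 fun T hT => (hc hT).2⟩,
      fun _ => subset_sUnion_of_mem⟩
  refine ⟨M, hM.prop.1, not_lt.1 fun hMκ => ?_, hM.prop.2⟩
  -- a point of `S` outside `bad` could be added to the maximal free set `M`
  set bad := M ∪ (⋃ i ∈ M, (G i : Set ι)) ∪ ⋃ j ∈ M, {i ∈ S | j ∈ G i}
  have hbad : #bad < κ := by
    refine (mk_union_le _ _).trans_lt (add_lt_of_lt hreg.aleph0_le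
      ((mk_union_le _ _).trans_lt (add_lt_of_lt hreg.aleph0_le hMκ ?_)) ?_)
    · exact (card_biUnion_lt_iff_forall_of_isRegular hreg hMκ).2 fun i _ =>
        (lt_aleph0_of_finite _).trans hκ
    · exact (card_biUnion_lt_iff_forall_of_isRegular hreg hMκ).2 fun j _ => hsparse j
  obtain ⟨i₀, hi₀S, hi₀⟩ := not_subset.1 fun h : S ⊆ bad =>
    (hS.trans (mk_le_mk_of_subset h)).not_gt hbad
  have hins : insert i₀ M ∈ {T | T ⊆ S ∧ T.Pairwise fun i j => j ∉ G i} := by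
    refine ⟨insert_subset hi₀S hM.prop.1, pairwise_insert.2 ⟨hM.prop.2, fun j hj _ => ⟨?_, ?_⟩⟩⟩
    · exact fun hjG => hi₀ (Or.inr (mem_biUnion hj ⟨hi₀S, hjG⟩))
    · exact fun hi₀G => hi₀ (Or.inl (Or.inr (mem_biUnion hj hi₀G)))
  exact hi₀ (Or.inl (Or.inl (hM.2 hins (subset_insert _ _) (mem_insert _ _))))

lemma exists_pairwise_notMem_of_card_le (n : ℕ) (G : ι → Finset ι) {S : Set ι} (hS : κ ≤ #S)
    (hG : ∀ i ∈ S, (G i).card ≤ n) :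
    ∃ S' ⊆ S, κ ≤ #S' ∧ S'.Pairwise fun i j => j ∉ G i := by
  induction n generalizing G S with
  | zero =>
    refine ⟨S, subset_rfl, hS, fun i hi j _ _ hj => ?_⟩
    simp [Finset.card_eq_zero.1 (Nat.le_zero.1 (hG i hi))] at hj
  | succ n ih =>
    classical
    by_cases hpop : ∃ t, κ ≤ #{i ∈ S | t ∈ G i}
    swap
    · push Not at hpop
      exact exists_pairwise_notMem_of_mk_lt hreg hκ G hS hpop
    -- a point `t` lying in `κ` many `G i` is removed from all of them
    obtain ⟨t, ht⟩ := hpop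
    obtain ⟨S', hS'sub, hS', hfree⟩ := ih (fun i => (G i).erase t) ht fun i hi => by
      rw [Finset.card_erase_of_mem hi.2]; have := hG i hi.1; omega
    refine ⟨S' \ {t}, sdiff_subset.trans (hS'sub.trans (sep_subset _ _)), ?_,
      (hfree.mono sdiff_subset).imp_on ?_⟩
    · refine not_lt.1 fun hlt => (hS'.trans (le_mk_sdiff_add_mk S' {t})).not_gt ?_
      exact add_lt_of_lt hreg.aleph0_le hlt (by simpa using (natCast_lt_aleph0 (n := 1)).trans hκ)
    · exact fun i _ j hj _ h hjG => h (Finset.mem_erase.2 ⟨hj.2, hjG⟩)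

theorem exists_pairwise_notMem (G : ι → Finset ι) {S : Set ι} (hS : κ ≤ #S) :
    ∃ S' ⊆ S, κ ≤ #S' ∧ S'.Pairwise fun i j => j ∉ G i := by
  obtain ⟨n, hn⟩ : ∃ n : ℕ, κ ≤ #{i ∈ S | (G i).card ≤ n} := by
    by_contra! h
    have hcover : S = ⋃ n : ℕ, {i ∈ S | (G i).card ≤ n} := by
      ext i; simpa using fun _ => ⟨_, le_rfl⟩
    refine hS.not_gt ?_
    rw [hcover, ← lift_uzero #(⋃ n : ℕ, _)]
    exact mk_iUnion_le_sum_mk_lift.trans_lt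
      (sum_lt_lift_of_isRegular hreg (by simpa using hκ) h)
  obtain ⟨S', hS'sub, hS', hfree⟩ :=
    exists_pairwise_notMem_of_card_le hreg hκ n G hn fun i hi => hi.2
  exact ⟨S', hS'sub.trans (sep_subset _ _), hS', hfree⟩

end FreeSet

section DualFamily

variable {ι V : Type*} [NormedAddCommGroup V] [NormedSpace ℝ V]

lemma abs_tsum_indicator_le (a : ι → ℝ) (T : Set ι) {r : ℝ}
    (h : ∀ F : Finset ι, ↑F ⊆ T → ∑ i ∈ F, |a i| ≤ r) : |∑' i, T.indicator a i| ≤ r := by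
  classical
  by_cases hs : Summable (T.indicator a)
  · calc |∑' i, T.indicator a i| ≤ ∑' i, |T.indicator a i| := by
          simpa only [Real.norm_eq_abs] using norm_tsum_le_tsum_norm hs.norm
      _ ≤ r := by
          refine Real.tsum_le_of_sum_le (fun i => abs_nonneg (T.indicator a i)) fun F => ?_
          have hF : ∑ i ∈ F, |T.indicator a i| = ∑ i ∈ F with i ∈ T, |a i| := by
            rw [Finset.sum_filter]
            exact Finset.sum_congr rfl fun i _ => by by_cases hi : i ∈ T <;> simp [hi]
          rw [hF]
          exact h _ fun i hi => (Finset.mem_filter.1 hi).2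
  · rw [tsum_eq_zero_of_not_summable hs, abs_zero]
    simpa using h ∅ (by simp)

lemma sum_abs_apply_le_of_norm_sum_smul_le {e : ι → StrongDual ℝ V} {C : ℝ}
    (hC : ∀ (F : Finset ι) (s : ι → ℝ), (∀ i, |s i| ≤ 1) → ‖∑ i ∈ F, s i • e i‖ ≤ C)
    (F : Finset ι) (w : V) : ∑ i ∈ F, |e i w| ≤ C * ‖w‖ := by
  have hsign : ∀ i, |(SignType.sign (e i w) : ℝ)| ≤ 1 := fun i => by
    rcases lt_trichotomy (e i w) 0 with h | h | h <;> simp [h]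
  calc ∑ i ∈ F, |e i w| = (∑ i ∈ F, (SignType.sign (e i w) : ℝ) • e i) w := by simp
    _ ≤ ‖∑ i ∈ F, (SignType.sign (e i w) : ℝ) • e i‖ * ‖w‖ := by
        refine (le_abs_self _).trans ?_
        rw [← Real.norm_eq_abs]
        exact ContinuousLinearMap.le_opNorm _ w
    _ ≤ C * ‖w‖ := by gcongr; exact hC F _ hsign

variable (e : ι → StrongDual ℝ V) {C : ℝ} (hC : ∀ (F : Finset ι) w, ∑ i ∈ F, |e i w| ≤ C * ‖w‖)
include hC

lemma summable_apply (w : V) : Summable fun i => e i w :=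
  (summable_of_sum_le (fun _ => abs_nonneg _) (hC · w)).of_abs

noncomputable def indicatorSum (T : Set ι) : StrongDual ℝ V :=
  LinearMap.mkContinuous
    { toFun w := ∑' i, T.indicator (e · w) i
      map_add' w₁ w₂ := by
        rw [← ((summable_apply e hC w₁).indicator T).tsum_add
          ((summable_apply e hC w₂).indicator T)]
        exact tsum_congr fun i => by by_cases hi : i ∈ T <;> simp [hi]
      map_smul' c w := by
        rw [RingHom.id_apply, smul_eq_mul, ← tsum_mul_left]
        exact tsum_congr fun i => by by_cases hi : i ∈ T <;> simp [hi] }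
    C fun w => by
      rw [Real.norm_eq_abs]
      exact abs_tsum_indicator_le _ T fun F _ => hC F w

lemma indicatorSum_apply (T : Set ι) (w : V) :
    indicatorSum e hC T w = ∑' i, T.indicator (e · w) i := rfl

lemma abs_indicatorSum_apply_sub_le (T : Set ι) {v : V} {i : ι} {r : ℝ}
    (hfree : ∀ F : Finset ι, i ∉ F → ∑ j ∈ F, |e j v| ≤ r) :
    |indicatorSum e hC T v - T.indicator (e · v) i| ≤ r := by
  classical
  rw [indicatorSum_apply, ((summable_apply e hC v).indicator T).tsum_eq_add_tsum_ite i,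
    add_sub_cancel_left]
  have hrest : (fun j => if j = i then 0 else T.indicator (e · v) j) =
      (T \ {i}).indicator (e · v) := by
    ext j; by_cases hj : j = i <;> by_cases hjT : j ∈ T <;> simp [hj, hjT]
  rw [hrest]
  exact abs_tsum_indicator_le _ _ fun F hF => hfree F fun hi => (hF hi).2 rfl

lemma indicatorSum_injective {v : ι → V} (hv : ∀ i, e i (v i) ≠ 0)
    (hfree : ∀ i (F : Finset ι), i ∉ F → ∑ j ∈ F, |e j (v i)| ≤ |e i (v i)| / 3) :
    Function.Injective (indicatorSum e hC) := by
  intro T T' hTT'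
  ext i
  have h := abs_indicatorSum_apply_sub_le e hC T (hfree i)
  have h' := abs_indicatorSum_apply_sub_le e hC T' (hfree i)
  rw [hTT'] at h
  have hdiff := (abs_sub_le _ (indicatorSum e hC T' (v i)) _).trans
    (add_le_add ((abs_sub_comm _ _).trans_le h) h')
  have hpos := abs_pos.2 (hv i)
  by_cases hi : i ∈ T <;> by_cases hi' : i ∈ T' <;> simp [hi, hi'] at hdiff ⊢ <;> linarith

end DualFamily

theorem two_pow_le_mk_strongDual {ι V : Type u} [NormedAddCommGroup V] [NormedSpace ℝ V]
    {e : ι → StrongDual ℝ V} {C : ℝ}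
    (hC : ∀ (F : Finset ι) (s : ι → ℝ), (∀ i, |s i| ≤ 1) → ‖∑ i ∈ F, s i • e i‖ ≤ C)
    (he : ∀ i, e i ≠ 0) {κ : Cardinal} (hreg : κ.IsRegular) (hκ : ℵ₀ < κ) (hι : κ ≤ #ι) :
    2 ^ κ ≤ #(StrongDual ℝ V) := by
  have hC' := sum_abs_apply_le_of_norm_sum_smul_le hC
  choose v hv using fun i => ContinuousLinearMap.exists_ne_zero (he i)
  -- `G i` holds the `j` for which `e j (v i)` is not negligible; on a free set these do not occur
  have hG : ∀ i, ∃ G : Finset ι, ∀ F : Finset ι, Disjoint F G →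
      ∑ j ∈ F, |e j (v i)| ≤ |e i (v i)| / 3 := fun i =>
    summable_iff_vanishing.1 (summable_of_sum_le (fun _ => abs_nonneg _) (hC' · (v i)))
      (Iic (|e i (v i)| / 3)) (Iic_mem_nhds (by positivity [hv i]))
  choose G hG using hG
  obtain ⟨S, -, hS, hfree⟩ := exists_pairwise_notMem hreg hκ G (S := univ) (by rwa [mk_univ])
  have hCS : ∀ (F : Finset S) w, ∑ i ∈ F, |e i w| ≤ C * ‖w‖ := fun F w => by
    simpa using hC' (F.map (Function.Embedding.subtype _)) w
  have hfreeS : ∀ (i : S) (F : Finset S), i ∉ F →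
      ∑ j ∈ F, |e j (v i)| ≤ |e i (v i)| / 3 := fun i F hi => by
    refine le_of_eq_of_le
      (Finset.sum_map F (Function.Embedding.subtype _) fun j => |e j (v i)|).symm
      (hG i _ (Finset.disjoint_left.2 fun j hj => ?_))
    obtain ⟨j, hjF, rfl⟩ := Finset.mem_map.1 hj
    exact hfree i.2 j.2 (fun h => hi (Subtype.ext h ▸ hjF))
  calc 2 ^ κ ≤ 2 ^ #S := power_le_power_left two_ne_zero hS
    _ = #(Set S) := mk_set.symm
    _ ≤ #(StrongDual ℝ V) :=
        mk_le_of_injective (indicatorSum_injective (fun i : S => e i) hCS (fun i => hv i) hfreeS)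

lemma isRegular_cof_continuum : ((ord 𝔠).cof).IsRegular :=
  isRegular_cof (isSuccLimit_ord aleph0_le_continuum)

lemma continuum_lt_two_pow_cof_continuum : 𝔠 < 2 ^ (ord 𝔠).cof :=
  calc 𝔠 < 𝔠 ^ (ord 𝔠).cof := lt_power_cof_ord aleph0_le_continuum
    _ = (2 ^ ℵ₀) ^ (ord 𝔠).cof := by rw [two_power_aleph0]
    _ = 2 ^ (ord 𝔠).cof := by rw [← power_mul, aleph0_mul_eq isRegular_cof_continuum.aleph0_le]

lemma aleph0_lt_cof_continuum : ℵ₀ < (ord 𝔠).cof :=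
  isRegular_cof_continuum.aleph0_le.lt_of_ne fun h => by
    have := continuum_lt_two_pow_cof_continuum
    rw [← h, two_power_aleph0] at this
    exact this.false

theorem quotient_by_oc_not_dual_general (X : BanachIdealSpace ℕ Measure.count)
    (hemb : ∃ K : ℝ, ∀ x, X.Mem x → ∀ n, |x n| ≤ K * X.N x)
    (hproper : ∃ x, X.Mem x ∧ x ∉ X.oc)
    (W : Type) [NormedAddCommGroup W] [NormedSpace ℝ W]
    (Q : (ℕ → ℝ) → W)
    (hQadd : ∀ x y, X.Mem x → X.Mem y → Q (x + y) = Q x + Q y)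
    (hQsmul : ∀ (c : ℝ) x, X.Mem x → Q (c • x) = c • Q x)
    (hQsurj : ∀ w : W, ∃ x, X.Mem x ∧ Q x = w)
    (hQker : ∀ x, X.Mem x → (Q x = 0 ↔ x ∈ X.oc))
    (hQnorm : ∀ x, X.Mem x → ‖Q x‖ = distIn X.N x X.oc) :
    ∀ (V : Type) (_ : NormedAddCommGroup V) (_ : NormedSpace ℝ V) (_ : CompleteSpace V),
      IsEmpty (W ≃L[ℝ] StrongDual ℝ V) := by
  intro V _ _ _
  refine ⟨fun J => ?_⟩
  obtain ⟨x, hx, hxoc⟩ := hproper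
  obtain ⟨δ, hδ, q, hq, hblock⟩ := X.exists_strictMono_blocks hemb hx hxoc
  set y : (ℕ → Bool) → ℕ → ℝ := fun i => (blockUnion q (prefixCodes i)).indicator |x|
  have hy : ∀ i, X.Mem (y i) := fun i => X.mem_indicator_abs hx _
  have hne : ∀ i, J (Q (y i)) ≠ 0 := fun i => by
    rw [map_ne_zero_iff _ J.injective, Ne, hQker _ (hy i)]
    exact X.indicator_blockUnion_notMem_oc hx hδ hq hblock (prefixCodes_infinite i)
  have hbound : ∀ (F : Finset (ℕ → Bool)) (s : (ℕ → Bool) → ℝ), (∀ i, |s i| ≤ 1) →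
      ‖∑ i ∈ F, s i • J (Q (y i))‖ ≤ ‖(J : W →L[ℝ] StrongDual ℝ V)‖ * X.N |x| := by
    intro F s hs
    simp_rw [← map_smul, ← map_sum, ← X.map_sum_smul hQadd hQsmul F s hy]
    refine (J : W →L[ℝ] StrongDual ℝ V).le_opNorm_of_le ?_
    rw [hQnorm _ (X.mem_sum F _ fun i _ => X.mem_smul _ _ (hy i))]
    exact X.distIn_sum_smul_indicator_le hx F _
      (fun i _ i' _ hii' => blockUnion_inter_finite hq.monotone (prefixCodes_inter_finite hii')) hs
  have hW : #W ≤ 𝔠 :=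
    calc #W ≤ #(ℕ → ℝ) := mk_le_of_surjective fun w => (hQsurj w).imp fun _ h => h.2
      _ = 𝔠 := by simp [mk_real]
  have hdual := two_pow_le_mk_strongDual hbound hne isRegular_cof_continuum
    aleph0_lt_cof_continuum (by simpa using Ordinal.cof_ord_le 𝔠)
  rw [← mk_congr J.toLinearEquiv.toEquiv] at hdual
  exact (continuum_lt_two_pow_cof_continuum.trans_le (hdual.trans hW)).false

/-- Let `X` be a Banach sequence space such that `X` embeds continuously into `ℓ∞`, `X_a`
is non-trivial, and `X_a ≠ X`. Then the quotient space `X / X_a` (here represented by any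
Banach space `W` together with a quotient map `Q` with kernel `X_a` and the quotient norm)
is not isomorphic to a dual Banach space. -/
theorem quotient_by_oc_not_dual (X : BanachIdealSpace ℕ Measure.count)
    (hemb : ∃ K : ℝ, ∀ x, X.Mem x → ∀ n, |x n| ≤ K * X.N x)
    (hnontriv : ∃ x ∈ X.oc, x ≠ 0)
    (hproper : ∃ x, X.Mem x ∧ x ∉ X.oc)
    (W : Type) [NormedAddCommGroup W] [NormedSpace ℝ W] [CompleteSpace W]
    (Q : (ℕ → ℝ) → W)
    (hQadd : ∀ x y, X.Mem x → X.Mem y → Q (x + y) = Q x + Q y)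
    (hQsmul : ∀ (c : ℝ) x, X.Mem x → Q (c • x) = c • Q x)
    (hQsurj : ∀ w : W, ∃ x, X.Mem x ∧ Q x = w)
    (hQker : ∀ x, X.Mem x → (Q x = 0 ↔ x ∈ X.oc))
    (hQnorm : ∀ x, X.Mem x → ‖Q x‖ = distIn X.N x X.oc) :
    ∀ (V : Type) (_ : NormedAddCommGroup V) (_ : NormedSpace ℝ V) (_ : CompleteSpace V),
      IsEmpty (W ≃L[ℝ] StrongDual ℝ V) :=
  quotient_by_oc_not_dual_general X hemb hproper W Q hQadd hQsmul hQsurj hQker hQnorm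
end

section
/- Let X be a rearrangement invariant function space on (0,∞) with the Fatou property such that L∞ ↪ X, the Cesàro operator C is bounded on X, and fχ_A ∈ X_a whenever f ∈ X and A has finite measure. Then the Cesàro space CX = { f : C(|f|) ∈ X } with norm ‖f‖_{CX} = ‖C(|f|)‖_X contains a lattice isometric copy of ℓ∞. -/
open Filter Topology MeasureTheory Set

open BanachIdealSpace

/-- The continuous Cesàro (Hardy) operator `C(f)(x) = (1/x) ∫₀ˣ |f(t)| dt`. -/
noncomputable def cesaro (f : ℝ → ℝ) (x : ℝ) : ℝ :=
  (1 / x) * ∫ t in Set.Ioo (0 : ℝ) x, |f t|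

/-!
Cut `(0, ∞)` at the factorials and give the piece ending at `(k+1)!` the label `n` when
`k = Nat.pair n m`. Every label then owns blocks `(k!, (k+1)!]` with `k` arbitrarily large, and
on such a block `C(χ_{A_n})(t) ≥ 1 - k!/t`, where `A_n` is the union of the pieces labelled `n`
(so `χ_{A_n} = Pi.single n 1 ∘ blockLabel`). Hence `C(χ_{A_n}) ≤ 1` exceeds every `λ < 1` on a
set of infinite measure, i.e. it is equimeasurable with `1` and `‖χ_{A_n}‖_{CX} = ‖1‖_X`. For a
bounded sequence `x`, the function `x ∘ blockLabel = Σ xₙ χ_{A_n}` has Cesàro mean at most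
`sup |xₙ|` and at least `|xₙ| C(χ_{A_n})` for each `n`, so its `CX`-norm is `sup |xₙ| · ‖1‖_X`.
-/

open scoped Nat

namespace BanachIdealSpace

variable {α : Type*} [MeasurableSpace α] {μ : Measure α} (X : BanachIdealSpace α μ)

lemma N_one_pos (h1 : X.Mem 1) (hμ : μ ≠ 0) : 0 < X.N 1 := by
  refine (X.N_nonneg 1).lt_of_ne fun h => hμ ?_
  simpa using X.N_eq_zero 1 h1 h.symm

lemma mem_and_N_le_of_abs_le (h1 : X.Mem 1) {f : α → ℝ} (hf : AEMeasurable f μ) {c : ℝ}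
    (hc : 0 ≤ c) (hfc : ∀ᵐ x ∂μ, |f x| ≤ c) : X.Mem f ∧ X.N f ≤ c * X.N 1 := by
  obtain ⟨hmem, hle⟩ := X.ideal f (c • 1) hf
    (by filter_upwards [hfc] with x hx; simpa [abs_of_nonneg hc] using hx) (X.mem_smul c 1 h1)
  exact ⟨hmem, hle.trans_eq (by rw [X.N_smul, abs_of_nonneg hc])⟩

lemma abs_mul_N_le {g h : α → ℝ} (hg : X.Mem g) (hh : AEMeasurable h μ) {c : ℝ}
    (hhg : ∀ᵐ x ∂μ, |c * h x| ≤ |g x|) : |c| * X.N h ≤ X.N g := by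
  rw [← X.N_smul]
  exact (X.ideal _ g (hh.const_smul c) hhg hg).2

variable {X}

lemma Symmetric.mem_and_N_eq_N_one (hX : X.Symmetric) (h1 : X.Mem 1) {g : α → ℝ}
    (hg : AEMeasurable g μ) (hg0 : ∀ x, 0 ≤ g x) (hg1 : ∀ x, g x ≤ 1)
    (hlarge : ∀ lam, 0 < lam → lam < 1 → μ {x | lam < g x} = μ univ) :
    X.Mem g ∧ X.N g = X.N 1 := by
  refine hX g 1 hg (fun lam hlam => ?_) h1
  simp only [abs_of_nonneg (hg0 _), Pi.one_apply, abs_one]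
  rcases lt_or_ge lam 1 with hlt | hge
  · simp [hlt, hlarge lam hlam hlt]
  · have hempty : {x | lam < g x} = ∅ :=
      eq_empty_of_forall_notMem fun x hx => (hg1 x).not_gt (hge.trans_lt hx)
    simp [hempty, hge.not_gt]

end BanachIdealSpace

open BanachIdealSpace

lemma cesaro_of_nonpos (f : ℝ → ℝ) {t : ℝ} (ht : t ≤ 0) : cesaro f t = 0 := by
  simp [cesaro, Ioo_eq_empty (not_lt.mpr ht)]

lemma cesaro_nonneg (f : ℝ → ℝ) (t : ℝ) : 0 ≤ cesaro f t := by
  rcases le_or_gt t 0 with ht | ht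
  · rw [cesaro_of_nonpos f ht]
  · exact mul_nonneg (by positivity) (integral_nonneg fun _ => abs_nonneg _)

lemma cesaro_le {f : ℝ → ℝ} {M : ℝ} (hM : ∀ u, |f u| ≤ M) (t : ℝ) : cesaro f t ≤ M := by
  rcases le_or_gt t 0 with ht | ht
  · rw [cesaro_of_nonpos f ht]
    exact (abs_nonneg _).trans (hM 0)
  · have hI : ∫ u in Ioo 0 t, |f u| ≤ ∫ _ in Ioo 0 t, M :=
      integral_mono_of_nonneg (ae_of_all _ fun _ => abs_nonneg _)
        (integrableOn_const measure_Ioo_lt_top.ne) (ae_of_all _ hM)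
    rw [setIntegral_const, Real.volume_real_Ioo_of_le ht.le, sub_zero, smul_eq_mul] at hI
    rw [cesaro, one_div, inv_mul_le_iff₀ ht]
    linarith

lemma cesaro_mono {f g : ℝ → ℝ} {t : ℝ} (hg : IntegrableOn g (Ioo 0 t))
    (hfg : ∀ u, |f u| ≤ |g u|) : cesaro f t ≤ cesaro g t := by
  rcases le_or_gt t 0 with ht | ht
  · simp [cesaro_of_nonpos _ ht]
  · exact mul_le_mul_of_nonneg_left (integral_mono_of_nonneg
      (ae_of_all _ fun _ => abs_nonneg _) hg.abs (ae_of_all _ hfg)) (by positivity)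

lemma measurable_cesaro {f : ℝ → ℝ} (hf : ∀ t, IntegrableOn f (Ioo 0 t)) :
    Measurable (cesaro f) := by
  have hmono : Monotone fun t => ∫ u in Ioo 0 t, |f u| := fun s t hst =>
    setIntegral_mono_set (hf t).abs (ae_of_all _ fun _ => abs_nonneg _)
      (Ioo_subset_Ioo_right hst).eventuallyLE
  exact (measurable_const.div measurable_id).mul hmono.measurable

lemma cesaro_smul (c : ℝ) (f : ℝ → ℝ) : cesaro (c • f) = |c| • cesaro f := by
  ext t
  simp only [cesaro, Pi.smul_apply, smul_eq_mul, abs_mul, integral_const_mul]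
  ring

lemma one_sub_div_le_cesaro {f : ℝ → ℝ} {a t : ℝ} (ha : 0 ≤ a) (hat : a < t)
    (hf : IntegrableOn f (Ioo 0 t)) (hf1 : ∀ u ∈ Ioo a t, 1 ≤ |f u|) :
    1 - a / t ≤ cesaro f t := by
  have ht : 0 < t := ha.trans_lt hat
  have hsub : Ioo a t ⊆ Ioo 0 t := Ioo_subset_Ioo_left ha
  have hI : t - a ≤ ∫ u in Ioo 0 t, |f u| := calc
    t - a = volume.real (Ioo a t) • (1 : ℝ) := by
      rw [Real.volume_real_Ioo_of_le hat.le, smul_eq_mul, mul_one]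
    _ ≤ ∫ u in Ioo a t, |f u| := setIntegral_ge_of_const_le measurableSet_Ioo
      measure_Ioo_lt_top.ne hf1 (hf.mono_set hsub).abs
    _ ≤ ∫ u in Ioo 0 t, |f u| := setIntegral_mono_set hf.abs
      (ae_of_all _ fun _ => abs_nonneg _) hsub.eventuallyLE
  calc 1 - a / t = t⁻¹ * (t - a) := by field_simp
    _ ≤ cesaro f t := by rw [cesaro, one_div]; gcongr

lemma exists_le_factorial_succ (t : ℝ) : ∃ k : ℕ, t ≤ (k + 1)! := by
  obtain ⟨n, hn⟩ := exists_nat_ge t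
  exact ⟨n, hn.trans (by exact_mod_cast n.le_succ.trans (n + 1).self_le_factorial)⟩

noncomputable def blockIndex (t : ℝ) : ℕ := Nat.find (exists_le_factorial_succ t)

lemma blockIndex_eq {k : ℕ} {t : ℝ} (ht : t ∈ Ioc (k ! : ℝ) (k + 1)!) : blockIndex t = k := by
  refine le_antisymm (Nat.find_le ht.2) (not_lt.mp fun hlt => ht.1.not_ge ?_)
  exact (Nat.find_spec (exists_le_factorial_succ t)).trans
    (by exact_mod_cast Nat.factorial_le hlt)

lemma monotone_blockIndex : Monotone blockIndex := fun _ _ hst =>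
  Nat.find_le (hst.trans (Nat.find_spec (exists_le_factorial_succ _)))

noncomputable def blockLabel (t : ℝ) : ℕ := (Nat.unpair (blockIndex t)).1

lemma blockLabel_eq_of_mem (n m : ℕ) {t : ℝ}
    (ht : t ∈ Ioc ((Nat.pair n m)! : ℝ) (Nat.pair n m + 1)!) : blockLabel t = n := by
  simp [blockLabel, blockIndex_eq ht]

lemma measurable_comp_blockLabel (x : ℕ → ℝ) : Measurable (x ∘ blockLabel) :=
  (measurable_from_nat (f := fun k => x (Nat.unpair k).1)).comp monotone_blockIndex.measurable

lemma integrableOn_comp_blockLabel {x : ℕ → ℝ} (hx : BddAbove (range fun n => |x n|))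
    (t : ℝ) : IntegrableOn (x ∘ blockLabel) (Ioo 0 t) :=
  Measure.integrableOn_of_bounded measure_Ioo_lt_top.ne
    (measurable_comp_blockLabel x).aestronglyMeasurable
    (ae_of_all _ fun u => le_ciSup hx (blockLabel u))

lemma abs_single_one_le_one (n k : ℕ) : |(Pi.single n 1 : ℕ → ℝ) k| ≤ 1 := by
  rcases eq_or_ne k n with rfl | hk <;> simp [*]

lemma bddAbove_abs_single_one (n : ℕ) : BddAbove (range fun k => |(Pi.single n 1 : ℕ → ℝ) k|) :=
  ⟨1, by rintro _ ⟨k, rfl⟩; exact abs_single_one_le_one n k⟩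

lemma lt_cesaro_single_comp_blockLabel (n m : ℕ) {lam t : ℝ} (hlam : 0 ≤ lam) (hlam1 : lam < 1)
    (ht : t ∈ Ioc ((Nat.pair n m)! / (1 - lam)) (Nat.pair n m + 1)!) :
    lam < cesaro ((Pi.single n 1 : ℕ → ℝ) ∘ blockLabel) t := by
  set K : ℝ := ((Nat.pair n m)! : ℝ)
  have hK : 0 < K := by positivity
  have hKt : K < t := lt_of_le_of_lt (le_div_self hK.le (by linarith) (by linarith)) ht.1
  have hdiv : K / t < 1 - lam := by
    rw [div_lt_iff₀ (hK.trans hKt), mul_comm]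
    exact (div_lt_iff₀ (by linarith)).1 ht.1
  have hone : ∀ u ∈ Ioo K t, 1 ≤ |((Pi.single n 1 : ℕ → ℝ) ∘ blockLabel) u| := fun u hu => by
    simp [blockLabel_eq_of_mem n m ⟨hu.1, hu.2.le.trans ht.2⟩]
  linarith [one_sub_div_le_cesaro hK.le hKt
    (integrableOn_comp_blockLabel (bddAbove_abs_single_one n) t) hone]

lemma volume_lt_cesaro_single_comp_blockLabel (n : ℕ) {lam : ℝ} (hlam : 0 ≤ lam)
    (hlam1 : lam < 1) :
    volume.restrict (Ioi 0) {t | lam < cesaro ((Pi.single n 1 : ℕ → ℝ) ∘ blockLabel) t} = ⊤ := by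
  refine ENNReal.eq_top_of_forall_nnreal_le fun M => ?_
  set r := (1 - lam)⁻¹
  obtain ⟨m, hm⟩ := exists_nat_ge ((M : ℝ) + r)
  set k := Nat.pair n m
  have hk : (M : ℝ) + r ≤ k := hm.trans (by exact_mod_cast Nat.right_le_pair n m)
  have hkfac : (1 : ℝ) ≤ k ! := by exact_mod_cast k.factorial_pos
  -- `(k+1)! - k! r = k! (k + 1 - r) ≥ k + 1 - r`
  have hlen : (M : ℝ) ≤ (k + 1)! - k ! / (1 - lam) := by
    rw [Nat.factorial_succ, Nat.cast_mul, div_eq_mul_inv]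
    push_cast
    nlinarith [M.coe_nonneg]
  have hsub : Ioc (k ! / (1 - lam) : ℝ) (k + 1)! ⊆
      {t | lam < cesaro ((Pi.single n 1 : ℕ → ℝ) ∘ blockLabel) t} ∩ Ioi 0 :=
    fun t ht => ⟨lt_cesaro_single_comp_blockLabel n m hlam hlam1 ht,
      lt_of_le_of_lt (div_nonneg (by positivity) (by linarith)) ht.1⟩
  calc (M : ENNReal) = ENNReal.ofReal M := (ENNReal.ofReal_coe_nnreal).symm
    _ ≤ volume (Ioc (k ! / (1 - lam) : ℝ) (k + 1)!) := by
      rw [Real.volume_Ioc]; exact ENNReal.ofReal_le_ofReal hlen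
    _ ≤ _ := (measure_mono hsub).trans (Measure.le_restrict_apply _ _)

lemma BanachIdealSpace.Symmetric.mem_and_N_cesaro_single_comp_blockLabel
    {X : BanachIdealSpace ℝ (volume.restrict (Ioi 0))} (hX : X.Symmetric) (h1 : X.Mem 1)
    (n : ℕ) : X.Mem (cesaro ((Pi.single n 1 : ℕ → ℝ) ∘ blockLabel)) ∧
      X.N (cesaro ((Pi.single n 1 : ℕ → ℝ) ∘ blockLabel)) = X.N 1 := by
  refine hX.mem_and_N_eq_N_one h1
    (measurable_cesaro (integrableOn_comp_blockLabel (bddAbove_abs_single_one n))).aemeasurable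
    (cesaro_nonneg _) (cesaro_le fun u => abs_single_one_le_one n _) fun lam hlam hlam1 => ?_
  rw [volume_lt_cesaro_single_comp_blockLabel n hlam.le hlam1]
  simp

lemma BanachIdealSpace.Symmetric.mem_and_N_cesaro_comp_blockLabel
    {X : BanachIdealSpace ℝ (volume.restrict (Ioi 0))} (hX : X.Symmetric) (h1 : X.Mem 1)
    {x : ℕ → ℝ} (hx : BddAbove (range fun n => |x n|)) :
    X.Mem (cesaro (x ∘ blockLabel)) ∧
      X.N (cesaro (x ∘ blockLabel)) = (⨆ n, |x n|) * X.N 1 := by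
  have hint := integrableOn_comp_blockLabel hx
  obtain ⟨hmem, hle⟩ := X.mem_and_N_le_of_abs_le h1 (measurable_cesaro hint).aemeasurable
    ((abs_nonneg _).trans (le_ciSup hx 0)) (ae_of_all _ fun t => by
      rw [abs_of_nonneg (cesaro_nonneg _ t)]
      exact cesaro_le (fun u => le_ciSup hx (blockLabel u)) t)
  refine ⟨hmem, hle.antisymm ?_⟩
  rw [Real.iSup_mul_of_nonneg (X.N_nonneg 1)]
  refine ciSup_le fun n => ?_
  obtain ⟨-, hNn⟩ := hX.mem_and_N_cesaro_single_comp_blockLabel h1 n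
  rw [← hNn]
  refine X.abs_mul_N_le hmem (measurable_cesaro
    (integrableOn_comp_blockLabel (bddAbove_abs_single_one n))).aemeasurable
    (ae_of_all _ fun t => ?_)
  have hdom : ∀ u, |(x n • ((Pi.single n 1 : ℕ → ℝ) ∘ blockLabel)) u| ≤
      |(x ∘ blockLabel) u| := fun u => by
    rcases eq_or_ne (blockLabel u) n with hu | hu <;> simp [hu]
  rw [abs_mul, abs_of_nonneg (cesaro_nonneg _ t), abs_of_nonneg (cesaro_nonneg _ t)]
  simpa [cesaro_smul] using cesaro_mono (hint t) hdom

theorem cesaro_space_contains_linf_general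
    (X : BanachIdealSpace ℝ (volume.restrict (Set.Ioi (0 : ℝ))))
    (hsymm : X.Symmetric)
    (hLinf : X.Mem (fun _ => 1)) :
    HasLatticeCopyLinf
      (fun f => AEMeasurable f (volume.restrict (Set.Ioi (0 : ℝ))) ∧ X.Mem (cesaro f))
      (fun f => X.N (cesaro f)) := by
  have hN1 : 0 < X.N 1 := X.N_one_pos hLinf (by simp)
  have hc : |(X.N 1)⁻¹| = (X.N 1)⁻¹ := abs_of_pos (inv_pos.2 hN1)
  refine ⟨fun x => (X.N 1)⁻¹ • (x ∘ blockLabel), fun x y => smul_add _ _ _,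
    fun c x => smul_comm (X.N 1)⁻¹ c (x ∘ blockLabel), fun x => ?_, fun x hx => ?_⟩
  · ext t
    simp [abs_mul, hc]
  · obtain ⟨hmem, hN⟩ := hsymm.mem_and_N_cesaro_comp_blockLabel hLinf hx
    refine ⟨⟨(measurable_comp_blockLabel x).aemeasurable.const_smul _, ?_⟩, ?_⟩
    · rw [cesaro_smul]
      exact X.mem_smul _ _ hmem
    · show X.N (cesaro ((X.N 1)⁻¹ • (x ∘ blockLabel))) = _
      rw [cesaro_smul, X.N_smul, abs_of_nonneg (abs_nonneg _), hc, hN]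
      field_simp

/-- Let `X` be a rearrangement invariant function space on `(0,∞)` with the Fatou
property such that `L∞ ↪ X`, the Cesàro operator `C` is bounded on `X`, and
`f·χ_A ∈ X_a` whenever `f ∈ X` and `A` has finite measure. Then the Cesàro space
`CX = { f : C(|f|) ∈ X }` with norm `‖f‖_{CX} = ‖C(|f|)‖_X` contains a lattice isometric
copy of `ℓ∞`. -/
theorem cesaro_space_contains_linf
    (X : BanachIdealSpace ℝ (volume.restrict (Set.Ioi (0 : ℝ))))
    (hsymm : X.Symmetric) (hFatou : X.Fatou)
    (hLinf : X.Mem (fun _ => 1))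
    (hCbdd : ∃ K : ℝ, ∀ f, X.Mem f → X.Mem (cesaro f) ∧ X.N (cesaro f) ≤ K * X.N f)
    (hD : ∀ f, X.Mem f → ∀ A : Set ℝ, MeasurableSet A →
      (volume.restrict (Set.Ioi (0 : ℝ))) A < ⊤ → Set.indicator A f ∈ X.oc) :
    HasLatticeCopyLinf
      (fun f => AEMeasurable f (volume.restrict (Set.Ioi (0 : ℝ))) ∧ X.Mem (cesaro f))
      (fun f => X.N (cesaro f)) :=
  cesaro_space_contains_linf_general X hsymm hLinf
end

section
/- Let X be a rearrangement invariant sequence space on which the discrete Cesàro operator C_d is bounded. Then the order continuous part of the Cesàro sequence space CX equals { x : C_d(|x|) ∈ X_a }, i.e., (CX)_a = C(X_a). -/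
open Filter Topology MeasureTheory Set

open BanachIdealSpace

/-- The discrete Cesàro operator `C_d(x)_n = (1/n) Σ_{k=1}^n x_k` (indexed from `0`). -/
noncomputable def cesaroSeq (x : ℕ → ℝ) (n : ℕ) : ℝ :=
  (∑ k ∈ Finset.range (n + 1), x k) / (n + 1)

/-!
A sequence `f ∈ X` lies in `X_a` as soon as its tails `𝟙_{[R,∞)} f` have small norm.
For `x ∈ (CX)_a` split `|x|` at a large `M`: the part beyond `M` has small Cesàro norm by order
continuity of `x` in `CX`, and for `m ≥ M` the first `M` terms contribute `S / (m + 1)` with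
`S = ∑_{k<M} |x k|`. The tails `𝟙_{[R,∞)} (m + 1)⁻¹` are small in `X`: they are dominated by
`C(C e_j) / A_R`, where `C(C e_j) ∈ X` by boundedness of `C` (for any `j` with `(C|x|)_j ≠ 0`)
and `A_R = ∑_{j ≤ k ≤ R} (k + 1)⁻¹ → ∞`. Conversely, if `C|x| ∈ X_a` and `0 ≤ uₙ ↓ 0` below
`|x|`, then `0 ≤ C uₙ ↓ 0` below `C|x|`.
-/

namespace cesaroSeq

lemma nonneg {a : ℕ → ℝ} (ha : ∀ k, 0 ≤ a k) (m : ℕ) : 0 ≤ cesaroSeq a m :=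
  div_nonneg (Finset.sum_nonneg fun k _ => ha k) (by positivity)

lemma mono {a b : ℕ → ℝ} (h : ∀ k, a k ≤ b k) (m : ℕ) : cesaroSeq a m ≤ cesaroSeq b m :=
  div_le_div_of_nonneg_right (Finset.sum_le_sum fun k _ => h k) (by positivity)

lemma tendsto {ι : Type*} {l : Filter ι} {a : ι → ℕ → ℝ} {b : ℕ → ℝ}
    (h : ∀ k, Tendsto (fun i => a i k) l (𝓝 (b k))) (m : ℕ) :
    Tendsto (fun i => cesaroSeq (a i) m) l (𝓝 (cesaroSeq b m)) :=
  (tendsto_finsetSum _ fun k _ => h k).div_const _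

end cesaroSeq

lemma Finset.sum_range_indicator_Ici {M : Type*} [AddCommMonoid M] (f : ℕ → M) (j n : ℕ) :
    ∑ k ∈ Finset.range n, (Set.Ici j).indicator f k = ∑ k ∈ Finset.Ico j n, f k := by
  rw [Finset.sum_indicator_eq_sum_filter]
  congr 1
  ext k
  simp [and_comm]

lemma cesaroSeq_eq_sum_div_add_cesaroSeq_indicator (a : ℕ → ℝ) {M m : ℕ} (hM : M ≤ m + 1) :
    cesaroSeq a m =
      (∑ k ∈ Finset.range M, a k) / (m + 1) + cesaroSeq ((Ici M).indicator a) m := by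
  rw [cesaroSeq, cesaroSeq, Finset.sum_range_indicator_Ici, ← add_div,
    Finset.sum_range_add_sum_Ico _ hM]

noncomputable def harmonicTail (R : ℕ) : ℕ → ℝ := (Ici R).indicator fun m => 1 / ((m : ℝ) + 1)

lemma harmonicTail_nonneg (R m : ℕ) : 0 ≤ harmonicTail R m :=
  indicator_nonneg (fun _ _ => by positivity) m

lemma cesaroSeq_single_one (j : ℕ) : cesaroSeq (Pi.single j 1) = harmonicTail j := by
  ext m
  by_cases hjm : j ≤ m <;>
    simp [cesaroSeq, harmonicTail, Finset.sum_pi_single', hjm]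

lemma tendsto_sum_range_harmonicTail_atTop (j : ℕ) :
    Tendsto (fun n => ∑ k ∈ Finset.range n, harmonicTail j k) atTop atTop := by
  have hsub := Real.tendsto_sum_range_one_div_nat_succ_atTop.atTop_add
    (tendsto_const_nhds (x := -∑ k ∈ Finset.range j, 1 / ((k : ℝ) + 1)))
  refine hsub.congr' ?_
  filter_upwards [eventually_ge_atTop j] with n hn
  rw [harmonicTail, Finset.sum_range_indicator_Ici, Finset.sum_Ico_eq_sub _ hn, sub_eq_add_neg]

lemma harmonicTail_le_inv_mul_cesaroSeq {j R : ℕ} (hjR : j ≤ R) (m : ℕ) :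
    harmonicTail R m ≤
      (∑ k ∈ Finset.range (R + 1), harmonicTail j k)⁻¹ * cesaroSeq (harmonicTail j) m := by
  set A := ∑ k ∈ Finset.range (R + 1), harmonicTail j k
  have hA : 0 < A := Finset.sum_pos' (fun k _ => harmonicTail_nonneg j k)
    ⟨j, Finset.mem_range.mpr (by omega), by
      rw [harmonicTail, indicator_of_mem (mem_Ici.mpr le_rfl)]; positivity⟩
  by_cases hRm : R ≤ m
  · have hAle : A ≤ ∑ k ∈ Finset.range (m + 1), harmonicTail j k :=
      Finset.sum_le_sum_of_subset_of_nonneg (Finset.range_subset_range.mpr (by omega))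
        fun k _ _ => harmonicTail_nonneg j k
    calc harmonicTail R m = A⁻¹ * (A / (m + 1)) := by
          rw [harmonicTail, indicator_of_mem (show m ∈ Ici R from hRm)]
          field_simp
      _ ≤ A⁻¹ * cesaroSeq (harmonicTail j) m := by
          unfold cesaroSeq
          gcongr
  · rw [harmonicTail, indicator_of_notMem (show m ∉ Ici R from hRm)]
    exact mul_nonneg (inv_nonneg.mpr hA.le) (cesaroSeq.nonneg (harmonicTail_nonneg j) m)

namespace BanachIdealSpace

variable (X : BanachIdealSpace ℕ Measure.count)

lemma mem_and_N_le_of_abs_le_s18 {f g : ℕ → ℝ} (hfg : ∀ m, |f m| ≤ |g m|) (hg : X.Mem g) :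
    X.Mem f ∧ X.N f ≤ X.N g :=
  X.ideal f g Measurable.of_discrete.aemeasurable (Measure.ae_count_iff.mpr hfg) hg

lemma mem_single_one {f : ℕ → ℝ} (hf : X.Mem f) {j : ℕ} (hj : f j ≠ 0) :
    X.Mem (Pi.single j 1) := by
  refine (X.mem_and_N_le_of_abs_le_s18 (g := (f j)⁻¹ • f) (fun m => ?_) (X.mem_smul _ _ hf)).1
  rcases eq_or_ne m j with rfl | hm
  · simp [hj]
  · simp only [Pi.single_apply, hm, if_false, abs_zero]; positivity

lemma mem_oc_of_forall_exists_N_indicator_lt {f : ℕ → ℝ} (hf : X.Mem f)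
    (htail : ∀ ε > 0, ∃ R, X.N ((Ici R).indicator f) < ε) : f ∈ X.oc := by
  refine ⟨hf, fun u _ hub _ hlim => ?_⟩
  simp only [Measure.ae_count_iff] at hub hlim
  rw [Metric.tendsto_atTop]
  intro ε hε
  obtain ⟨R, hR⟩ := htail (ε / 2) (half_pos hε)
  set δ := ε / 2 / (X.N f + 1)
  have hδ : 0 < δ := div_pos (half_pos hε) (by linarith [X.N_nonneg f])
  have hδf : δ * X.N f < ε / 2 := by
    rw [div_mul_eq_mul_div, div_lt_iff₀ (by linarith [X.N_nonneg f])]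
    nlinarith [X.N_nonneg f]
  have hhead : ∀ᶠ n in atTop, ∀ m ∈ Finset.range R, u n m ≤ δ * |f m| := by
    refine (Finset.eventually_all _).mpr fun m _ => ?_
    rcases (abs_nonneg (f m)).eq_or_lt with h0 | hpos
    · exact Eventually.of_forall fun n => by rw [← h0, mul_zero]; exact (hub n m).2.trans h0.ge
    · exact (hlim m).eventually (gt_mem_nhds (mul_pos hδ hpos)) |>.mono fun n => le_of_lt
  obtain ⟨n₀, hn₀⟩ := eventually_atTop.mp hhead
  refine ⟨n₀, fun n hn => ?_⟩
  have hdom : ∀ m, |u n m| ≤ |(δ • f + (Ici R).indicator f) m| := by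
    intro m
    rw [abs_of_nonneg (hub n m).1]
    by_cases hm : m < R
    · simpa [hm, abs_mul, abs_of_pos hδ] using hn₀ n hn m (Finset.mem_range.mpr hm)
    · have : |δ * f m + f m| = (δ + 1) * |f m| := by
        rw [← add_one_mul, abs_mul, abs_of_pos (by linarith)]
      simp only [Pi.add_apply, Pi.smul_apply, smul_eq_mul, indicator_of_mem
        (show m ∈ Ici R from not_lt.mp hm), this]
      nlinarith [(hub n m).2, abs_nonneg (f m)]
  have hNu := (X.mem_and_N_le_of_abs_le_s18 hdom
    (X.mem_add _ _ (X.mem_smul δ f hf) (X.mem_indicator hf _))).2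
  have hadd := X.N_add _ _ (X.mem_smul δ f hf) (X.mem_indicator hf (Ici R))
  rw [X.N_smul, abs_of_pos hδ] at hadd
  rw [Real.dist_eq, sub_zero, abs_of_nonneg (X.N_nonneg _)]
  linarith

lemma eventually_mem_harmonicTail_and_tendsto_N
    (hC : ∀ y, X.Mem y → X.Mem (cesaroSeq y)) {j : ℕ} (hj : X.Mem (Pi.single j 1)) :
    (∀ᶠ R in atTop, X.Mem (harmonicTail R)) ∧
      Tendsto (fun R => X.N (harmonicTail R)) atTop (𝓝 0) := by
  set G := cesaroSeq (harmonicTail j)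
  have hG : X.Mem G := hC _ (cesaroSeq_single_one j ▸ hC _ hj)
  set c : ℕ → ℝ := fun R => (∑ k ∈ Finset.range (R + 1), harmonicTail j k)⁻¹
  have hc : Tendsto c atTop (𝓝 0) := tendsto_inv_atTop_zero.comp
    ((tendsto_sum_range_harmonicTail_atTop j).comp (tendsto_add_atTop_nat 1))
  have hbound : ∀ᶠ R in atTop, X.Mem (harmonicTail R) ∧ X.N (harmonicTail R) ≤ c R * X.N G := by
    filter_upwards [eventually_ge_atTop j] with R hR
    have hcR : 0 ≤ c R := inv_nonneg.mpr (Finset.sum_nonneg fun k _ => harmonicTail_nonneg j k)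
    have hdom : ∀ m, |harmonicTail R m| ≤ |(c R • G) m| := fun m => by
      rw [abs_of_nonneg (harmonicTail_nonneg R m), Pi.smul_apply, smul_eq_mul,
        abs_of_nonneg (mul_nonneg hcR (cesaroSeq.nonneg (harmonicTail_nonneg j) m))]
      exact harmonicTail_le_inv_mul_cesaroSeq hR m
    obtain ⟨hmem, hle⟩ := X.mem_and_N_le_of_abs_le_s18 hdom (X.mem_smul (c R) G hG)
    rw [X.N_smul, abs_of_nonneg hcR] at hle
    exact ⟨hmem, hle⟩
  refine ⟨hbound.mono fun _ h => h.1, ?_⟩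
  have hlim : Tendsto (fun R => c R * X.N G) atTop (𝓝 0) := by simpa using hc.mul_const (X.N G)
  exact tendsto_of_tendsto_of_tendsto_of_le_of_le' tendsto_const_nhds hlim
    (Eventually.of_forall fun R => X.N_nonneg _) (hbound.mono fun _ h => h.2)

lemma mem_ocSet_cesaro_of_mem_oc {x : ℕ → ℝ} (hx : (cesaroSeq fun n => |x n|) ∈ X.oc) :
    x ∈ ocSet Measure.count (fun x => X.Mem (cesaroSeq fun n => |x n|))
      (fun x => X.N (cesaroSeq fun n => |x n|)) := by
  refine ⟨hx.1, fun u hu hub hdec hlim => ?_⟩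
  simp only [Measure.ae_count_iff] at hub hdec hlim
  have habs : ∀ n m, |u n m| = u n m := fun n m => abs_of_nonneg (hub n m).1
  have hCnonneg : ∀ n m, 0 ≤ cesaroSeq (fun k => |u n k|) m :=
    fun n => cesaroSeq.nonneg fun k => abs_nonneg _
  refine hx.2 _ hu (fun n => ?_) (fun n => ?_) ?_ <;> simp only [Measure.ae_count_iff]
  · refine fun m => ⟨hCnonneg n m, ?_⟩
    rw [abs_of_nonneg (cesaroSeq.nonneg (fun k => abs_nonneg _) m)]
    exact cesaroSeq.mono (fun k => (habs n k).trans_le (hub n k).2) m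
  · exact cesaroSeq.mono fun k => by rw [habs, habs]; exact hdec n k
  · simpa [cesaroSeq] using cesaroSeq.tendsto fun k => (hlim k).abs

lemma mem_cesaroSeq_indicator_abs {x : ℕ → ℝ} (hx : X.Mem (cesaroSeq fun n => |x n|))
    (s : Set ℕ) : X.Mem (cesaroSeq (s.indicator fun n => |x n|)) := by
  have hnonneg : ∀ k, 0 ≤ s.indicator (fun n => |x n|) k :=
    indicator_nonneg fun _ _ => abs_nonneg _
  refine (X.mem_and_N_le_of_abs_le_s18 (fun m => ?_) hx).1
  rw [abs_of_nonneg (cesaroSeq.nonneg hnonneg m),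
    abs_of_nonneg (cesaroSeq.nonneg (fun k => abs_nonneg _) m)]
  exact cesaroSeq.mono (indicator_le_self' fun _ _ => abs_nonneg _) m

lemma tendsto_N_cesaroSeq_indicator_Ici {x : ℕ → ℝ}
    (hx : x ∈ ocSet Measure.count (fun x => X.Mem (cesaroSeq fun n => |x n|))
      (fun x => X.N (cesaroSeq fun n => |x n|))) :
    Tendsto (fun M => X.N (cesaroSeq ((Ici M).indicator fun n => |x n|))) atTop (𝓝 0) := by
  set w : ℕ → ℕ → ℝ := fun M => (Ici M).indicator fun n => |x n|
  have hw : ∀ M k, 0 ≤ w M k ∧ w M k ≤ |x k| := fun M k =>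
    ⟨indicator_nonneg (fun _ _ => abs_nonneg _) k, indicator_le_self' (fun _ _ => abs_nonneg _) k⟩
  have habs : ∀ M, (fun k => |w M k|) = w M := fun M => funext fun k => abs_of_nonneg (hw M k).1
  have h := hx.2 w
    (fun M => by beta_reduce; rw [habs]; exact X.mem_cesaroSeq_indicator_abs hx.1 _)
    (fun M => Measure.ae_count_iff.mpr (hw M))
    (fun M => Measure.ae_count_iff.mpr fun k =>
      indicator_le_indicator_of_subset (Ici_subset_Ici.mpr M.le_succ) (fun _ => abs_nonneg _) k)
    (Measure.ae_count_iff.mpr fun k => tendsto_const_nhds.congr' <| by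
      filter_upwards [eventually_gt_atTop k] with M hM
      exact (indicator_of_notMem (show k ∉ Ici M from not_le.mpr hM) _).symm)
  simpa only [habs] using h

lemma cesaroSeq_abs_mem_oc (hC : ∀ y, X.Mem y → X.Mem (cesaroSeq y)) {x : ℕ → ℝ}
    (hx : x ∈ ocSet Measure.count (fun x => X.Mem (cesaroSeq fun n => |x n|))
      (fun x => X.N (cesaroSeq fun n => |x n|))) :
    (cesaroSeq fun n => |x n|) ∈ X.oc := by
  have hf : X.Mem (cesaroSeq fun n => |x n|) := hx.1
  refine X.mem_oc_of_forall_exists_N_indicator_lt hf fun ε hε => ?_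
  rcases eq_or_ne (cesaroSeq fun n => |x n|) 0 with hf0 | hf0
  · exact ⟨0, by rwa [hf0, indicator_zero', X.N_zero]⟩
  obtain ⟨j, hj⟩ := Function.ne_iff.mp hf0
  have hH := X.eventually_mem_harmonicTail_and_tendsto_N hC (X.mem_single_one hf hj)
  obtain ⟨M, hM⟩ := ((X.tendsto_N_cesaroSeq_indicator_Ici hx).eventually
    (gt_mem_nhds (half_pos hε))).exists
  set S := ∑ k ∈ Finset.range M, |x k|
  have hS : 0 ≤ S := Finset.sum_nonneg fun k _ => abs_nonneg _
  have hSH : Tendsto (fun R => S * X.N (harmonicTail R)) atTop (𝓝 0) := by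
    simpa using hH.2.const_mul S
  obtain ⟨R, hMR, hmemR, hR⟩ := ((eventually_ge_atTop M).and
    (hH.1.and (hSH.eventually (gt_mem_nhds (half_pos hε))))).exists
  refine ⟨R, ?_⟩
  have hmemCw := X.mem_cesaroSeq_indicator_abs hf (Ici M)
  have hdom : ∀ m, |(Ici R).indicator (cesaroSeq fun n => |x n|) m| ≤
      |(cesaroSeq ((Ici M).indicator fun n => |x n|) + S • harmonicTail R) m| := by
    intro m
    by_cases hm : m ∈ Ici R
    · rw [indicator_of_mem hm, cesaroSeq_eq_sum_div_add_cesaroSeq_indicator _ (M := M)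
        (by have := mem_Ici.mp hm; omega), Pi.add_apply, Pi.smul_apply, smul_eq_mul,
        harmonicTail, indicator_of_mem hm, mul_one_div, add_comm]
    · rw [indicator_of_notMem hm, abs_zero]
      exact abs_nonneg _
  have hle := (X.mem_and_N_le_of_abs_le_s18 hdom (X.mem_add _ _ hmemCw (X.mem_smul S _ hmemR))).2
  have hadd := X.N_add _ _ hmemCw (X.mem_smul S _ hmemR)
  rw [X.N_smul, abs_of_nonneg hS] at hadd
  linarith

end BanachIdealSpace

theorem oc_cesaro_seq_eq_general (X : BanachIdealSpace ℕ Measure.count)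
    (hCbdd : ∃ K : ℝ, ∀ x, X.Mem x →
      X.Mem (cesaroSeq x) ∧ X.N (cesaroSeq x) ≤ K * X.N x) :
    ocSet Measure.count (fun x => X.Mem (cesaroSeq fun n => |x n|))
        (fun x => X.N (cesaroSeq fun n => |x n|)) =
      {x | X.Mem (cesaroSeq fun n => |x n|) ∧ (cesaroSeq fun n => |x n|) ∈ X.oc} := by
  obtain ⟨K, hK⟩ := hCbdd
  ext x
  exact ⟨fun hx => ⟨hx.1, X.cesaroSeq_abs_mem_oc (fun y hy => (hK y hy).1) hx⟩,
    fun hx => X.mem_ocSet_cesaro_of_mem_oc hx.2⟩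

/-- Let `X` be a rearrangement invariant sequence space on which the discrete Cesàro
operator `C_d` is bounded. Then the order continuous part of the Cesàro sequence space
`CX` equals `{ x : C_d(|x|) ∈ X_a }`, i.e. `(CX)_a = C(X_a)`. -/
theorem oc_cesaro_seq_eq (X : BanachIdealSpace ℕ Measure.count)
    (hsymm : X.Symmetric)
    (hCbdd : ∃ K : ℝ, ∀ x, X.Mem x →
      X.Mem (cesaroSeq x) ∧ X.N (cesaroSeq x) ≤ K * X.N x) :
    ocSet Measure.count (fun x => X.Mem (cesaroSeq fun n => |x n|))
        (fun x => X.N (cesaroSeq fun n => |x n|)) =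
      {x | X.Mem (cesaroSeq fun n => |x n|) ∧ (cesaroSeq fun n => |x n|) ∈ X.oc} :=
  oc_cesaro_seq_eq_general X hCbdd
end

section
/- Let X be a rearrangement invariant sequence space on which the discrete Cesàro operator C_d is bounded. Then the Cesàro sequence space CX is order continuous if and only if X is order continuous. -/
open Filter Topology MeasureTheory Set

open BanachIdealSpace

lemma ae_count_iff {p : ℕ → Prop} :
    (∀ᵐ n ∂(Measure.count : Measure ℕ), p n) ↔ ∀ n, p n := by
  rw [ae_iff, Measure.count_eq_zero_iff]
  simp [Set.eq_empty_iff_forall_notMem]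

lemma aemeas (f : ℕ → ℝ) : AEMeasurable f (Measure.count : Measure ℕ) :=
  (measurable_of_countable f).aemeasurable

lemma cesaro_nonneg_s19 {x : ℕ → ℝ} (hx : ∀ n, 0 ≤ x n) (n : ℕ) : 0 ≤ cesaroSeq x n :=
  div_nonneg (Finset.sum_nonneg fun k _ => hx k) (by positivity)

lemma cesaro_mono_s19 {x y : ℕ → ℝ} (h : ∀ n, x n ≤ y n) (n : ℕ) :
    cesaroSeq x n ≤ cesaroSeq y n := by
  unfold cesaroSeq
  gcongr with i hi
  exact h i

lemma cesaro_tendsto_zero {u : ℕ → ℕ → ℝ}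
    (h : ∀ k, Tendsto (fun n => u n k) atTop (𝓝 0)) (k : ℕ) :
    Tendsto (fun n => cesaroSeq (u n) k) atTop (𝓝 0) := by
  have := (tendsto_finset_sum (Finset.range (k+1)) (fun i _ => h i)).div_const ((k : ℝ) + 1)
  simpa [cesaroSeq] using this

lemma cesaro_one : cesaroSeq (fun _ => (1:ℝ)) = fun _ => (1:ℝ) := by
  funext n
  unfold cesaroSeq
  rw [Finset.sum_const, Finset.card_range, nsmul_eq_mul, mul_one]
  push_cast
  rw [div_self]
  positivity

lemma eventually_zero_tendsto {u : ℕ → ℝ} (h : ∀ᶠ m in atTop, u m = 0) :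
    Tendsto u atTop (𝓝 0) :=
  Tendsto.congr' (by filter_upwards [h] with m hm using hm.symm) tendsto_const_nhds
noncomputable def decSet (y : ℕ → ℝ) (k : ℕ) : Set ℝ :=
  {lam : ℝ | 0 < lam ∧ {j | lam < y j}.Finite ∧ ({j | lam < y j}).ncard ≤ k}

noncomputable def decRe (y : ℕ → ℝ) (k : ℕ) : ℝ := sInf (decSet y k)

lemma decSet_bddBelow (y : ℕ → ℝ) (k : ℕ) : BddBelow (decSet y k) :=
  ⟨0, fun _ hl => le_of_lt hl.1⟩

lemma decSet_nonempty {y : ℕ → ℝ} {B : ℝ} (hB : ∀ j, y j ≤ B) (k : ℕ) :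
    (decSet y k).Nonempty := by
  have he : {j | max B 0 + 1 < y j} = (∅ : Set ℕ) := by
    ext j
    simp only [Set.mem_setOf_eq, Set.mem_empty_iff_false, iff_false, not_lt]
    have := hB j
    have := le_max_left B 0
    linarith
  exact ⟨max B 0 + 1, by positivity, by rw [he]; exact Set.finite_empty,
    by rw [he]; simp⟩

lemma decRe_nonneg (y : ℕ → ℝ) (k : ℕ) : 0 ≤ decRe y k :=
  Real.sInf_nonneg fun _ hl => le_of_lt hl.1

lemma decRe_le {y : ℕ → ℝ} {k : ℕ} {lam : ℝ} (h : lam ∈ decSet y k) : decRe y k ≤ lam :=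
  csInf_le (decSet_bddBelow y k) h

lemma decSet_mono_y {y y' : ℕ → ℝ} (h : ∀ j, y j ≤ y' j) (k : ℕ) :
    decSet y' k ⊆ decSet y k := by
  rintro lam ⟨h1, h2, h3⟩
  have hsub : {j | lam < y j} ⊆ {j | lam < y' j} := fun j hj => lt_of_lt_of_le hj (h j)
  exact ⟨h1, h2.subset hsub, le_trans (Set.ncard_le_ncard hsub h2) h3⟩

lemma decRe_mono_y {y y' : ℕ → ℝ} {B : ℝ} (h : ∀ j, y j ≤ y' j) (hB : ∀ j, y' j ≤ B)
    (k : ℕ) : decRe y k ≤ decRe y' k :=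
  csInf_le_csInf (decSet_bddBelow y k) (decSet_nonempty hB k) (decSet_mono_y h k)

lemma decRe_anti_k {y : ℕ → ℝ} {B : ℝ} (hB : ∀ j, y j ≤ B) {k k' : ℕ} (h : k ≤ k') :
    decRe y k' ≤ decRe y k :=
  csInf_le_csInf (decSet_bddBelow y k') (decSet_nonempty hB k)
    (fun _ hl => ⟨hl.1, hl.2.1, hl.2.2.trans h⟩)

lemma decRe_lt_iff {y : ℕ → ℝ} {B : ℝ} (hB : ∀ j, y j ≤ B)
    (hfin : ∀ lam : ℝ, 0 < lam → {j | lam < y j}.Finite) {lam : ℝ} (hlam : 0 < lam)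
    (k : ℕ) : lam < decRe y k ↔ k < ({j | lam < y j}).ncard := by
  constructor
  · intro h
    by_contra hk
    push_neg at hk
    exact absurd (decRe_le ⟨hlam, hfin lam hlam, hk⟩) (not_le.2 h)
  · intro hk
    have hF : {j | lam < y j}.Finite := hfin lam hlam
    have hne : hF.toFinset.Nonempty := by
      rw [← Finset.card_pos, ← Set.ncard_eq_toFinset_card _ hF]
      omega
    have hlt : lam < hF.toFinset.inf' hne y := by
      rw [Finset.lt_inf'_iff]
      intro j hj
      exact hF.mem_toFinset.1 hj
    refine lt_of_lt_of_le hlt (le_csInf ⟨_, decSet_nonempty hB k |>.some_mem⟩ ?_)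
    rintro mu ⟨h1, h2, h3⟩
    by_contra hmu
    push_neg at hmu
    have hsub : {j | lam < y j} ⊆ {j | mu < y j} := by
      intro j hj
      exact lt_of_lt_of_le hmu (Finset.inf'_le y (hF.mem_toFinset.2 hj))
    have := Set.ncard_le_ncard hsub h2
    omega

lemma decRe_count {y : ℕ → ℝ} {B : ℝ} (hB : ∀ j, y j ≤ B)
    (hfin : ∀ lam : ℝ, 0 < lam → {j | lam < y j}.Finite) {lam : ℝ} (hlam : 0 < lam) :
    Measure.count {k | lam < decRe y k} = Measure.count {j | lam < y j} := by
  have hF := hfin lam hlam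
  have hset : {k | lam < decRe y k} = Set.Iio ({j | lam < y j}).ncard := by
    ext k; rw [Set.mem_setOf_eq, decRe_lt_iff hB hfin hlam k, Set.mem_Iio]
  have h2 : (Set.Iio (({j | lam < y j}).ncard)).ncard = ({j | lam < y j}).ncard := by
    rw [Set.ncard_eq_toFinset_card']; simp
  rw [hset, Measure.count_apply_finite _ (Set.finite_Iio _),
    Measure.count_apply_finite _ hF]
  congr 1
  rw [← Set.ncard_eq_toFinset_card _ (Set.finite_Iio _), ← Set.ncard_eq_toFinset_card _ hF, h2]

lemma superlevel_ite_lt {lam c : ℝ} (hlam : 0 < lam) (hl : lam < c) (P : ℕ → Prop)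
    [DecidablePred P] :
    {k : ℕ | lam < |if P k then c else 0|} = {k | P k} := by
  ext k
  by_cases h : P k
  · simp only [Set.mem_setOf_eq, h, if_true, iff_true]
    rw [abs_of_pos (lt_trans hlam hl)]; exact hl
  · simp only [Set.mem_setOf_eq, h, if_false, iff_false, abs_zero, not_lt]
    exact hlam.le
lemma superlevel_ite_ge {lam c : ℝ} (hc : 0 ≤ c) (hl : c ≤ lam) (P : ℕ → Prop)
    [DecidablePred P] :
    {k : ℕ | lam < |if P k then c else 0|} = (∅ : Set ℕ) := by
  ext k
  by_cases h : P k
  · simp only [Set.mem_setOf_eq, h, if_true, Set.mem_empty_iff_false, iff_false, not_lt,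
      abs_of_nonneg hc]
    exact hl
  · simp only [Set.mem_setOf_eq, h, if_false, Set.mem_empty_iff_false, iff_false, not_lt,
      abs_zero]
    exact le_trans hc hl
lemma superlevel_const_lt {lam c : ℝ} (hlam : 0 < lam) (hl : lam < c) :
    {k : ℕ | lam < |(fun _ : ℕ => c) k|} = Set.univ := by
  ext k
  simp only [Set.mem_setOf_eq, Set.mem_univ, iff_true]
  rw [abs_of_pos (lt_trans hlam hl)]; exact hl
lemma superlevel_const_ge {lam c : ℝ} (hc : 0 ≤ c) (hl : c ≤ lam) :
    {k : ℕ | lam < |(fun _ : ℕ => c) k|} = (∅ : Set ℕ) := by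
  ext k
  simp only [Set.mem_setOf_eq, Set.mem_empty_iff_false, iff_false, not_lt,
    abs_of_nonneg hc]
  exact hl
lemma setOf_le_eq_Ici (m : ℕ) : {k : ℕ | m ≤ k} = Set.Ici m := rfl

lemma N_sum_le (X : BanachIdealSpace ℕ Measure.count) (s : Finset ℕ) (f : ℕ → ℕ → ℝ)
    (h : ∀ i ∈ s, X.Mem (f i)) :
    X.Mem (∑ i ∈ s, f i) ∧ X.N (∑ i ∈ s, f i) ≤ ∑ i ∈ s, X.N (f i) := by
  classical
  induction s using Finset.cons_induction with
  | empty => simpa using ⟨X.mem_zero, le_of_eq X.N_zero⟩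
  | cons a s ha ih =>
    rw [Finset.sum_cons, Finset.sum_cons]
    have ih' := ih (fun i hi => h i (Finset.mem_cons_of_mem hi))
    have hma := h a (Finset.mem_cons_self a s)
    exact ⟨X.mem_add _ _ hma ih'.1,
      le_trans (X.N_add _ _ hma ih'.1) (by linarith [ih'.2])⟩

lemma one_not_mem (X : BanachIdealSpace ℕ Measure.count) (hsymm : X.Symmetric)
    (hCX : ∀ x : ℕ → ℝ, X.Mem (cesaroSeq fun n => |x n|) →
        x ∈ ocSet Measure.count (fun y => X.Mem (cesaroSeq fun n => |y n|))
          (fun y => X.N (cesaroSeq fun n => |y n|))) :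
    ¬ X.Mem (fun _ => (1:ℝ)) := by
  intro h1
  have habs1 : (fun n : ℕ => |(fun _ : ℕ => (1:ℝ)) n|) = fun _ : ℕ => (1:ℝ) := by
    funext n; simp
  set u : ℕ → ℕ → ℝ := fun m k => if m ≤ k then 1 else 0 with hu
  have hu01 : ∀ m k, 0 ≤ u m k ∧ u m k ≤ 1 := by
    intro m k; simp only [hu]; split <;> norm_num
  have hCu : ∀ m, X.Mem (cesaroSeq (u m)) ∧ X.N (cesaroSeq (u m)) ≤ X.N (fun _ => (1:ℝ)) := by
    intro m
    refine X.ideal _ _ (aemeas _) (ae_count_iff.2 fun k => ?_) h1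
    have h0 : 0 ≤ cesaroSeq (u m) k := cesaro_nonneg_s19 (fun n => (hu01 m n).1) k
    have hle : cesaroSeq (u m) k ≤ 1 := by
      have := cesaro_mono_s19 (fun n => (hu01 m n).2) k
      rwa [cesaro_one] at this
    rw [abs_of_nonneg h0]
    simpa using hle
  have hx : X.Mem (cesaroSeq fun n => |(fun _ : ℕ => (1:ℝ)) n|) := by
    rw [habs1, cesaro_one]; exact h1
  have habsu : ∀ m, (fun k => |u m k|) = u m := by
    intro m; funext k; exact abs_of_nonneg (hu01 m k).1
  have hoc := (hCX (fun _ => 1) hx).2 u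
    (fun m => by
      show X.Mem (cesaroSeq fun k => |u m k|)
      rw [habsu m]; exact (hCu m).1)
    (fun m => ae_count_iff.2 fun k => ⟨(hu01 m k).1, by simpa using (hu01 m k).2⟩)
    (fun m => ae_count_iff.2 fun k => by
      by_cases h : m ≤ k
      · by_cases h' : m + 1 ≤ k <;> simp [hu, h, h']
      · have h' : ¬ m + 1 ≤ k := by omega
        simp [hu, h, h'])
    (ae_count_iff.2 fun k => eventually_zero_tendsto
      (by filter_upwards [eventually_ge_atTop (k+1)] with m hm
          simp only [hu]
          rw [if_neg (by omega)]))
  have hoc' : Tendsto (fun m => X.N (cesaroSeq (u m))) atTop (𝓝 0) := by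
    refine hoc.congr fun m => ?_
    show X.N (cesaroSeq fun k => |u m k|) = _
    rw [habsu m]
  have key : ∀ m, X.N (fun _ => (1:ℝ)) ≤ 2 * X.N (cesaroSeq (u m)) := by
    intro m
    set w : ℕ → ℝ := fun k => if 2*m ≤ k then (1:ℝ) else 0 with hw
    have hwmem : X.Mem w ∧ X.N w = X.N (fun _ => (1:ℝ)) := by
      refine hsymm w (fun _ => 1) (aemeas _) (fun lam hlam => ?_) h1
      rcases lt_or_ge lam 1 with hl | hl
      · have e1 : {k : ℕ | lam < |w k|} = Set.Ici (2*m) := by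
          simp only [hw]
          rw [superlevel_ite_lt hlam hl, setOf_le_eq_Ici]
        rw [e1, superlevel_const_lt hlam hl,
          Measure.count_apply_infinite (Set.Ici_infinite _),
          Measure.count_apply_infinite Set.infinite_univ]
      · have e1 : {k : ℕ | lam < |w k|} = (∅ : Set ℕ) := by
          simp only [hw]
          rw [superlevel_ite_ge (by norm_num) hl]
        rw [e1, superlevel_const_ge (by norm_num) hl]
    have hhalf : X.Mem ((1/2 : ℝ) • w) ∧ X.N ((1/2 : ℝ) • w) ≤ X.N (cesaroSeq (u m)) := by
      refine X.ideal _ _ (aemeas _) (ae_count_iff.2 fun k => ?_) (hCu m).1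
      have h0 : 0 ≤ cesaroSeq (u m) k := cesaro_nonneg_s19 (fun n => (hu01 m n).1) k
      rw [abs_of_nonneg h0]
      rcases le_or_gt (2*m) k with hk | hk
      · have hwk : ((1/2 : ℝ) • w) k = 1/2 := by simp [hw, if_pos hk]
        rw [hwk, abs_of_nonneg (by norm_num : (0:ℝ) ≤ (1/2 : ℝ))]
        have hsum : ∑ i ∈ Finset.range (k+1), u m i = ((k+1-m : ℕ) : ℝ) := by
          simp only [hu]
          rw [Finset.sum_boole]
          congr 1
          have : (Finset.range (k+1)).filter (fun i => m ≤ i) = Finset.Ico m (k+1) := by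
            ext i; simp [Finset.mem_filter, Finset.mem_range, Finset.mem_Ico]; omega
          rw [this, Nat.card_Ico]
        have hm1 : m ≤ k + 1 := by omega
        have hcast : ((k+1-m : ℕ) : ℝ) = (k:ℝ) + 1 - m := by
          push_cast [Nat.cast_sub hm1]; ring
        have hk' : (2*m : ℝ) ≤ (k : ℝ) := by exact_mod_cast hk
        have hden : (0:ℝ) < (k:ℝ) + 1 := by positivity
        show (1/2 : ℝ) ≤ cesaroSeq (u m) k
        unfold cesaroSeq
        rw [hsum, hcast, le_div_iff₀ hden]
        linarith
      · have hwk : ((1/2 : ℝ) • w) k = 0 := by simp [hw, if_neg (by omega : ¬ 2*m ≤ k)]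
        rw [hwk]
        simpa using h0
    have hNw : X.N ((1/2 : ℝ) • w) = (1/2) * X.N w := by
      rw [X.N_smul]; norm_num
    have := hhalf.2
    rw [hNw, hwmem.2] at this
    linarith
  have hfin : X.N (fun _ => (1:ℝ)) ≤ 0 := by
    have h2 : Tendsto (fun m => 2 * X.N (cesaroSeq (u m))) atTop (𝓝 (2 * 0)) :=
      hoc'.const_mul 2
    rw [mul_zero] at h2
    exact ge_of_tendsto h2 (Filter.Eventually.of_forall key)
  have hN0 : X.N (fun _ => (1:ℝ)) = 0 := le_antisymm hfin (X.N_nonneg _)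
  have := ae_count_iff.1 (X.N_eq_zero _ h1 hN0) 0
  norm_num at this

lemma superlevel_finite (X : BanachIdealSpace ℕ Measure.count)
    (h1 : ¬ X.Mem (fun _ => (1:ℝ))) (hsymm : X.Symmetric)
    {f : ℕ → ℝ} (hf : X.Mem f) {ε : ℝ} (hε : 0 < ε) :
    {j | ε < |f j|}.Finite := by
  classical
  by_contra hinf
  set g : ℕ → ℝ := fun j => if ε < |f j| then ε else 0 with hg
  have hgmem : X.Mem g := by
    refine (X.ideal g f (aemeas _) (ae_count_iff.2 fun j => ?_) hf).1
    simp only [hg]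
    split <;> rename_i hj
    · rw [abs_of_pos hε]; linarith
    · simp [abs_nonneg]
  have hconst : X.Mem (fun _ : ℕ => ε) := by
    refine (hsymm (fun _ => ε) g (aemeas _) (fun lam hlam => ?_) hgmem).1
    rcases lt_or_ge lam ε with hl | hl
    · have e2 : {k : ℕ | lam < |g k|} = {j | ε < |f j|} := by
        simp only [hg]
        rw [superlevel_ite_lt hlam hl]
      rw [e2, superlevel_const_lt hlam hl,
        Measure.count_apply_infinite Set.infinite_univ,
        Measure.count_apply_infinite hinf]
    · have e2 : {k : ℕ | lam < |g k|} = (∅ : Set ℕ) := by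
        simp only [hg]
        rw [superlevel_ite_ge hε.le hl]
      rw [e2, superlevel_const_ge hε.le hl]
  have hone : X.Mem (fun _ : ℕ => (1:ℝ)) := by
    have hs := X.mem_smul ε⁻¹ _ hconst
    have heq : ε⁻¹ • (fun _ : ℕ => ε) = fun _ : ℕ => (1:ℝ) := by
      funext k; simp [Pi.smul_apply]; field_simp
    rwa [heq] at hs
  exact h1 hone

lemma tail_norm_tendsto (X : BanachIdealSpace ℕ Measure.count) (hsymm : X.Symmetric)
    (hCbdd : ∃ K : ℝ, ∀ x, X.Mem x →
      X.Mem (cesaroSeq x) ∧ X.N (cesaroSeq x) ≤ K * X.N x)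
    (hCX : ∀ x : ℕ → ℝ, X.Mem (cesaroSeq fun n => |x n|) →
        x ∈ ocSet Measure.count (fun y => X.Mem (cesaroSeq fun n => |y n|))
          (fun y => X.N (cesaroSeq fun n => |y n|)))
    {x : ℕ → ℝ} (hx : X.Mem x) :
    Tendsto (fun m => X.N (fun j => if m ≤ j then |x j| else 0)) atTop (𝓝 0) := by
  classical
  obtain ⟨K, hK⟩ := hCbdd
  have h1 := one_not_mem X hsymm hCX
  have hfin : ∀ ε : ℝ, 0 < ε → {j | ε < |x j|}.Finite :=
    fun ε hε => superlevel_finite X h1 hsymm hx hε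
  set y : ℕ → ℕ → ℝ := fun m j => if m ≤ j then |x j| else 0 with hy
  have hy_nonneg : ∀ m j, 0 ≤ y m j := by
    intro m j; simp only [hy]; split <;> simp [abs_nonneg]
  have hy_le : ∀ m j, y m j ≤ |x j| := by
    intro m j; simp only [hy]; split <;> simp [abs_nonneg]
  have hy0 : ∀ j, y 0 j = |x j| := by
    intro j; simp only [hy]; rw [if_pos (Nat.zero_le j)]
  have hy_anti : ∀ m j, y (m+1) j ≤ y m j := by
    intro m j
    show (if m + 1 ≤ j then |x j| else 0) ≤ (if m ≤ j then |x j| else 0)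
    by_cases h : m + 1 ≤ j
    · rw [if_pos h, if_pos (by omega : m ≤ j)]
    · rw [if_neg h]
      exact hy_nonneg m j
  -- global bound for |x|
  set F1 := (hfin 1 one_pos).toFinset with hF1
  set B : ℝ := 1 + ∑ j ∈ F1, |x j| with hB
  have hsum_nonneg : (0:ℝ) ≤ ∑ j ∈ F1, |x j| :=
    Finset.sum_nonneg fun j _ => abs_nonneg _
  have hBx : ∀ j, |x j| ≤ B := by
    intro j
    by_cases h : 1 < |x j|
    · have hjF : j ∈ F1 := by
        rw [hF1, Set.Finite.mem_toFinset]; exact h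
      have := Finset.single_le_sum (f := fun j => |x j|)
        (fun i _ => abs_nonneg (x i)) hjF
      rw [hB]; linarith
    · push_neg at h
      rw [hB]; linarith
  have hBy : ∀ m j, y m j ≤ B := fun m j => (hy_le m j).trans (hBx j)
  have hyfin : ∀ m, ∀ lam : ℝ, 0 < lam → {j | lam < y m j}.Finite := by
    intro m lam hlam
    refine (hfin lam hlam).subset ?_
    intro j hj
    exact lt_of_lt_of_le hj (hy_le m j)
  have hymem : ∀ m, X.Mem (y m) := by
    intro m
    refine (X.ideal (y m) x (aemeas _) (ae_count_iff.2 fun j => ?_) hx).1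
    rw [abs_of_nonneg (hy_nonneg m j)]
    exact hy_le m j
  set v : ℕ → ℕ → ℝ := fun m => decRe (y m) with hv
  have hv_nonneg : ∀ m k, 0 ≤ v m k := fun m k => decRe_nonneg _ _
  have habsv : ∀ m, (fun k => |v m k|) = v m := by
    intro m; funext k; exact abs_of_nonneg (hv_nonneg m k)
  have hvy : ∀ m, X.Mem (v m) ∧ X.N (v m) = X.N (y m) := by
    intro m
    refine hsymm (v m) (y m) (aemeas _) (fun lam hlam => ?_) (hymem m)
    have e1 : {k : ℕ | lam < |v m k|} = {k : ℕ | lam < v m k} := by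
      ext k; rw [Set.mem_setOf_eq, Set.mem_setOf_eq, abs_of_nonneg (hv_nonneg m k)]
    have e2 : {k : ℕ | lam < |y m k|} = {k : ℕ | lam < y m k} := by
      ext k; rw [Set.mem_setOf_eq, Set.mem_setOf_eq, abs_of_nonneg (hy_nonneg m k)]
    rw [e1, e2]
    exact decRe_count (hBy m) (hyfin m) hlam
  have hMemCv : ∀ m, X.Mem (cesaroSeq (v m)) := fun m => (hK _ (hvy m).1).1
  have hvCv : ∀ m k, v m k ≤ cesaroSeq (v m) k := by
    intro m k
    have hle : ∀ i ∈ Finset.range (k+1), v m k ≤ v m i := by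
      intro i hi
      exact decRe_anti_k (hBy m) (Nat.lt_succ_iff.1 (Finset.mem_range.1 hi))
    have hs := Finset.sum_le_sum hle
    rw [Finset.sum_const, Finset.card_range, nsmul_eq_mul] at hs
    have hden : (0:ℝ) < (k:ℝ) + 1 := by positivity
    unfold cesaroSeq
    rw [le_div_iff₀ hden]
    calc v m k * ((k:ℝ) + 1) = ((k:ℝ)+1) * v m k := by ring
    _ = ((k+1 : ℕ) : ℝ) * v m k := by push_cast; ring
    _ ≤ _ := hs
  have hNvCv : ∀ m, X.N (v m) ≤ X.N (cesaroSeq (v m)) := by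
    intro m
    refine (X.ideal (v m) (cesaroSeq (v m)) (aemeas _) (ae_count_iff.2 fun k => ?_)
      (hMemCv m)).2
    rw [abs_of_nonneg (hv_nonneg m k),
      abs_of_nonneg (cesaro_nonneg_s19 (hv_nonneg m) k)]
    exact hvCv m k
  have hz : X.Mem (cesaroSeq fun n => |v 0 n|) := by
    rw [habsv 0]; exact hMemCv 0
  have hvtend : ∀ k, Tendsto (fun m => v m k) atTop (𝓝 0) := by
    intro k
    rw [Metric.tendsto_atTop]
    intro ε hε
    set F' := (hfin (ε/2) (half_pos hε)).toFinset with hF'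
    refine ⟨F'.sup id + 1, fun m hm => ?_⟩
    have he : {j | ε/2 < y m j} = (∅ : Set ℕ) := by
      ext j
      simp only [Set.mem_setOf_eq, Set.mem_empty_iff_false, iff_false, not_lt]
      simp only [hy]
      split <;> rename_i hmj
      · by_contra hcon
        push_neg at hcon
        have hjF : j ∈ F' := by rw [hF', Set.Finite.mem_toFinset]; exact hcon
        have : j ≤ F'.sup id := Finset.le_sup (f := id) hjF
        omega
      · linarith
    have hmem : (ε/2) ∈ decSet (y m) k := by
      refine ⟨half_pos hε, ?_, ?_⟩
      · rw [he]; exact Set.finite_empty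
      · rw [he]; simp
    have hle := decRe_le hmem
    rw [Real.dist_eq, sub_zero, abs_of_nonneg (hv_nonneg m k)]
    calc v m k ≤ ε/2 := hle
    _ < ε := by linarith
  have hoc := (hCX (v 0) hz).2 v
    (fun m => by
      show X.Mem (cesaroSeq fun k => |v m k|)
      rw [habsv m]; exact hMemCv m)
    (fun m => ae_count_iff.2 fun k => by
      refine ⟨hv_nonneg m k, ?_⟩
      rw [abs_of_nonneg (hv_nonneg 0 k)]
      refine decRe_mono_y (fun j => ?_) (hBy 0) k
      rw [hy0 j]
      exact hy_le m j)
    (fun m => ae_count_iff.2 fun k =>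
      decRe_mono_y (hy_anti m) (hBy m) k)
    (ae_count_iff.2 hvtend)
  have hoc' : Tendsto (fun m => X.N (cesaroSeq (v m))) atTop (𝓝 0) := by
    refine hoc.congr fun m => ?_
    show X.N (cesaroSeq fun k => |v m k|) = _
    rw [habsv m]
  refine tendsto_of_tendsto_of_tendsto_of_le_of_le tendsto_const_nhds hoc'
    (fun m => X.N_nonneg _) (fun m => ?_)
  show X.N (y m) ≤ X.N (cesaroSeq (v m))
  rw [← (hvy m).2]
  exact hNvCv m

/-- Let `X` be a rearrangement invariant sequence space on which the discrete Cesàro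
operator `C_d` is bounded. Then the Cesàro sequence space `CX` is order continuous if and
only if `X` is order continuous. -/
theorem cesaro_seq_order_continuous_iff (X : BanachIdealSpace ℕ Measure.count)
    (hsymm : X.Symmetric)
    (hCbdd : ∃ K : ℝ, ∀ x, X.Mem x →
      X.Mem (cesaroSeq x) ∧ X.N (cesaroSeq x) ≤ K * X.N x) :
    (∀ x : ℕ → ℝ, X.Mem (cesaroSeq fun n => |x n|) →
        x ∈ ocSet Measure.count (fun y => X.Mem (cesaroSeq fun n => |y n|))
          (fun y => X.N (cesaroSeq fun n => |y n|))) ↔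
      (∀ x : ℕ → ℝ, X.Mem x → x ∈ X.oc) := by
  classical
  constructor
  · -- CX order continuous → X order continuous
    intro hCX xx hxx
    refine ⟨hxx, ?_⟩
    intro u hu hbd hdec hlim
    have hbd' : ∀ n k, 0 ≤ u n k ∧ u n k ≤ |xx k| := fun n => ae_count_iff.1 (hbd n)
    have hlim' : ∀ k, Tendsto (fun n => u n k) atTop (𝓝 0) := ae_count_iff.1 hlim
    have htail := tail_norm_tendsto X hsymm hCbdd hCX hxx
    rw [Metric.tendsto_atTop]
    intro ε hε
    rw [Metric.tendsto_atTop] at htail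
    obtain ⟨m, hm⟩ := htail (ε/2) (half_pos hε)
    have hym : X.N (fun j => if m ≤ j then |xx j| else 0) < ε/2 := by
      have := hm m le_rfl
      rwa [Real.dist_eq, sub_zero, abs_of_nonneg (X.N_nonneg _)] at this
    have hMemym : X.Mem (fun j => if m ≤ j then |xx j| else 0) := by
      refine (X.ideal _ xx (aemeas _) (ae_count_iff.2 fun j => ?_) hxx).1
      by_cases h : m ≤ j
      · rw [if_pos h, abs_abs]
      · rw [if_neg h]; simp [abs_nonneg]
    set e : ℕ → ℕ → ℝ := fun k j => if j = k then (1:ℝ) else 0 with he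
    have hmem_uek : ∀ n k, X.Mem ((u n k) • e k) := by
      intro n k
      refine (X.ideal _ xx (aemeas _) (ae_count_iff.2 fun j => ?_) hxx).1
      by_cases h : j = k
      · subst h
        have hval : ((u n j) • e j) j = u n j := by simp [he]
        rw [hval, abs_of_nonneg (hbd' n j).1]
        exact (hbd' n j).2
      · have hval : ((u n k) • e k) j = 0 := by simp [he, if_neg h]
        rw [hval]
        simp [abs_nonneg]
    have hheadN : ∀ n, X.Mem (∑ k ∈ Finset.range m, (u n k) • e k) ∧
        X.N (∑ k ∈ Finset.range m, (u n k) • e k) ≤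
          ∑ k ∈ Finset.range m, (u n k) * X.N (e k) := by
      intro n
      have h := N_sum_le X (Finset.range m) (fun k => (u n k) • e k)
        (fun k _ => hmem_uek n k)
      refine ⟨h.1, h.2.trans (le_of_eq ?_)⟩
      refine Finset.sum_congr rfl fun k _ => ?_
      rw [X.N_smul, abs_of_nonneg (hbd' n k).1]
    have hdecomp : ∀ n, u n = (∑ k ∈ Finset.range m, (u n k) • e k) +
        (fun j => if m ≤ j then u n j else 0) := by
      intro n
      funext j
      rw [Pi.add_apply, Finset.sum_apply]
      simp only [Pi.smul_apply, he, smul_eq_mul, mul_ite, mul_one, mul_zero]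
      rw [Finset.sum_ite_eq (Finset.range m) j (fun k => u n k)]
      by_cases h : j < m
      · rw [if_pos (Finset.mem_range.2 h), if_neg (by omega : ¬ m ≤ j), add_zero]
      · rw [if_neg (fun hc => h (Finset.mem_range.1 hc)), if_pos (by omega : m ≤ j),
          zero_add]
    have hmem_tail : ∀ n, X.Mem (fun j => if m ≤ j then u n j else 0) ∧
        X.N (fun j => if m ≤ j then u n j else 0) ≤
          X.N (fun j => if m ≤ j then |xx j| else 0) := by
      intro n
      refine X.ideal _ _ (aemeas _) (ae_count_iff.2 fun j => ?_) hMemym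
      by_cases h : m ≤ j
      · rw [if_pos h, if_pos h, abs_abs, abs_of_nonneg (hbd' n j).1]
        exact (hbd' n j).2
      · rw [if_neg h, if_neg h]
    have hNle : ∀ n, X.N (u n) ≤
        (∑ k ∈ Finset.range m, (u n k) * X.N (e k)) + ε/2 := by
      intro n
      calc X.N (u n) = X.N ((∑ k ∈ Finset.range m, (u n k) • e k) +
          (fun j => if m ≤ j then u n j else 0)) := by rw [← hdecomp n]
      _ ≤ X.N (∑ k ∈ Finset.range m, (u n k) • e k) +
          X.N (fun j => if m ≤ j then u n j else 0) :=
          X.N_add _ _ (hheadN n).1 (hmem_tail n).1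
      _ ≤ (∑ k ∈ Finset.range m, (u n k) * X.N (e k)) + ε/2 := by
          have h1 := (hheadN n).2
          have h2 := (hmem_tail n).2
          linarith
    have hsumto : Tendsto (fun n => ∑ k ∈ Finset.range m, (u n k) * X.N (e k))
        atTop (𝓝 0) := by
      have h := tendsto_finset_sum (Finset.range m)
        (fun k (_ : k ∈ Finset.range m) => (hlim' k).mul_const (X.N (e k)))
      simpa using h
    rw [Metric.tendsto_atTop] at hsumto
    obtain ⟨n₀, hn₀⟩ := hsumto (ε/2) (half_pos hε)
    refine ⟨n₀, fun n hn => ?_⟩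
    have hs := hn₀ n hn
    rw [Real.dist_eq, sub_zero] at hs
    have hs' : ∑ k ∈ Finset.range m, (u n k) * X.N (e k) < ε/2 :=
      lt_of_le_of_lt (le_abs_self _) hs
    rw [Real.dist_eq, sub_zero, abs_of_nonneg (X.N_nonneg _)]
    have := hNle n
    linarith
  · -- X order continuous → CX order continuous
    intro hXoc xx hxx
    refine ⟨hxx, ?_⟩
    intro u hu hbd hdec hlim
    have hbd' : ∀ n k, 0 ≤ u n k ∧ u n k ≤ |xx k| := fun n => ae_count_iff.1 (hbd n)
    have hdec' : ∀ n k, u (n+1) k ≤ u n k := fun n => ae_count_iff.1 (hdec n)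
    have hlim' : ∀ k, Tendsto (fun n => u n k) atTop (𝓝 0) := ae_count_iff.1 hlim
    have habsu : ∀ n, (fun k => |u n k|) = u n := by
      intro n; funext k; exact abs_of_nonneg (hbd' n k).1
    have hu' : ∀ n, X.Mem (cesaroSeq (u n)) := by
      intro n
      have h2 : X.Mem (cesaroSeq fun k => |u n k|) := hu n
      rwa [habsu n] at h2
    have hfnn : ∀ k, 0 ≤ cesaroSeq (fun j => |xx j|) k :=
      cesaro_nonneg_s19 (fun j => abs_nonneg _)
    have hf := hXoc (cesaroSeq fun j => |xx j|) hxx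
    have hconc := hf.2 (fun n => cesaroSeq (u n)) hu'
      (fun n => ae_count_iff.2 fun k => by
        refine ⟨cesaro_nonneg_s19 (fun j => (hbd' n j).1) k, ?_⟩
        rw [abs_of_nonneg (hfnn k)]
        exact cesaro_mono_s19 (fun j => (hbd' n j).2) k)
      (fun n => ae_count_iff.2 fun k => cesaro_mono_s19 (hdec' n) k)
      (ae_count_iff.2 fun k => cesaro_tendsto_zero hlim' k)
    refine hconc.congr fun n => ?_
    show X.N (cesaroSeq (u n)) = X.N (cesaroSeq fun k => |u n k|)
    rw [habsu n]
end
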